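/- arXiv:2604.23603 — 15 statements merged into one kernel-verified Lean document; each statement's English description precedes it below -/
import Mathlib

section
/- For every natural number t with 0 ≤ t ≤ γ² − 1, the set T_t = {(i + j·α² + t·α²·β² : ZMod n) : 0 ≤ i ≤ α² − 1, 0 ≤ j ≤ β² − 1} is an independent set of the graph Cay(G,C), i.e., no two distinct elements of T_t are adjacent. -/
/-- The prime-square-order Cayley graph on `ZMod n` with connecting set
`C = {x : addOrderOf x = α² ∨ addOrderOf x = β² ∨ addOrderOf x = γ²}`:
distinct `x, y` are adjacent iff `x - y ∈ C`. -/
def cayP2 (n α β γ : ℕ) : SimpleGraph (ZMod n) where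
  Adj x y := x ≠ y ∧ (addOrderOf (x - y) = α ^ 2 ∨ addOrderOf (x - y) = β ^ 2 ∨
    addOrderOf (x - y) = γ ^ 2)
  symm := ⟨fun x y => by
    rintro ⟨hxy, h⟩
    refine ⟨hxy.symm, ?_⟩
    rwa [show y - x = -(x - y) by ring, addOrderOf_neg]⟩
  loopless := ⟨fun x => by simp⟩

set_option maxHeartbeats 1000000 in
theorem stmt_1 (α β γ : ℕ) (hα : α.Prime) (hβ : β.Prime) (hγ : γ.Prime)
    (hαβ : α < β) (hβγ : β < γ) (t : ℕ) (ht : t ≤ γ ^ 2 - 1) :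
    ∀ x ∈ {z : ZMod (α ^ 2 * β ^ 2 * γ ^ 2) | ∃ i j : ℕ, i ≤ α ^ 2 - 1 ∧ j ≤ β ^ 2 - 1 ∧
        z = ((i + j * α ^ 2 + t * α ^ 2 * β ^ 2 : ℕ) : ZMod (α ^ 2 * β ^ 2 * γ ^ 2))},
      ∀ y ∈ {z : ZMod (α ^ 2 * β ^ 2 * γ ^ 2) | ∃ i j : ℕ, i ≤ α ^ 2 - 1 ∧ j ≤ β ^ 2 - 1 ∧
        z = ((i + j * α ^ 2 + t * α ^ 2 * β ^ 2 : ℕ) : ZMod (α ^ 2 * β ^ 2 * γ ^ 2))},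
      ¬ (cayP2 (α ^ 2 * β ^ 2 * γ ^ 2) α β γ).Adj x y := by
  have hαp := hα.pos
  have hβp := hβ.pos
  have hγp := hγ.pos
  have hα1 : 1 ≤ α ^ 2 := Nat.one_le_pow _ _ hαp
  have hβ1 : 1 ≤ β ^ 2 := Nat.one_le_pow _ _ hβp
  have hγ1 : 1 ≤ γ ^ 2 := Nat.one_le_pow _ _ hγp
  have hn : 0 < α ^ 2 * β ^ 2 * γ ^ 2 := by positivity
  haveI : NeZero (α ^ 2 * β ^ 2 * γ ^ 2) := ⟨hn.ne'⟩
  rintro x ⟨i, j, hi, hj, rfl⟩ y ⟨i', j', hi', hj', rfl⟩ ⟨hne, hord⟩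
  have hi2 : i < α ^ 2 := lt_of_le_of_lt hi (Nat.sub_lt hα1 one_pos)
  have hi2' : i' < α ^ 2 := lt_of_le_of_lt hi' (Nat.sub_lt hα1 one_pos)
  have hj2 : j < β ^ 2 := lt_of_le_of_lt hj (Nat.sub_lt hβ1 one_pos)
  have hj2' : j' < β ^ 2 := lt_of_le_of_lt hj' (Nat.sub_lt hβ1 one_pos)
  set d : ℤ := (i : ℤ) + j * α ^ 2 - ((i' : ℤ) + j' * α ^ 2) with hd
  have hsub : ((i + j * α ^ 2 + t * α ^ 2 * β ^ 2 : ℕ) : ZMod (α ^ 2 * β ^ 2 * γ ^ 2))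
      - ((i' + j' * α ^ 2 + t * α ^ 2 * β ^ 2 : ℕ) : ZMod (α ^ 2 * β ^ 2 * γ ^ 2))
      = ((d : ℤ) : ZMod (α ^ 2 * β ^ 2 * γ ^ 2)) := by
    push_cast [hd]; ring
  -- bound on |d|
  have habs : |d| < (α : ℤ) ^ 2 * β ^ 2 := by
    rw [abs_lt]
    have c1 : (i : ℤ) < (α : ℤ) ^ 2 := by exact_mod_cast hi2
    have c2 : (i' : ℤ) < (α : ℤ) ^ 2 := by exact_mod_cast hi2'
    have c3 : (j : ℤ) < (β : ℤ) ^ 2 := by exact_mod_cast hj2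
    have c4 : (j' : ℤ) < (β : ℤ) ^ 2 := by exact_mod_cast hj2'
    have c5 : (0:ℤ) ≤ i := Int.natCast_nonneg _
    have c6 : (0:ℤ) ≤ i' := Int.natCast_nonneg _
    have c7 : (0:ℤ) ≤ j := Int.natCast_nonneg _
    have c8 : (0:ℤ) ≤ j' := Int.natCast_nonneg _
    have cα : (0:ℤ) < (α:ℤ)^2 := by positivity
    have e3 : (j:ℤ) * α^2 ≤ ((β:ℤ)^2 - 1) * α^2 :=
      mul_le_mul_of_nonneg_right (by linarith) cα.le
    have e4 : (j':ℤ) * α^2 ≤ ((β:ℤ)^2 - 1) * α^2 :=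
      mul_le_mul_of_nonneg_right (by linarith) cα.le
    have e7 : (0:ℤ) ≤ (j:ℤ) * α^2 := by positivity
    have e8 : (0:ℤ) ≤ (j':ℤ) * α^2 := by positivity
    rw [hd]
    constructor <;> linarith
  -- generic step: from the order equation deduce a divisibility on d
  have key : ∀ k m : ℕ, α ^ 2 * β ^ 2 * γ ^ 2 = k * m → 0 < k →
      addOrderOf (((d : ℤ) : ZMod (α ^ 2 * β ^ 2 * γ ^ 2))) = k → (m : ℤ) ∣ d := by
    intro k m hkm hk hordk
    have hz : k • (((d : ℤ) : ZMod (α ^ 2 * β ^ 2 * γ ^ 2))) = 0 := by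
      rw [← hordk]; exact addOrderOf_nsmul_eq_zero _
    have : (((k : ℤ) * d : ℤ) : ZMod (α ^ 2 * β ^ 2 * γ ^ 2)) = 0 := by
      push_cast
      rw [← hz]; simp [nsmul_eq_mul]
    have hdvd : ((α ^ 2 * β ^ 2 * γ ^ 2 : ℕ) : ℤ) ∣ (k : ℤ) * d :=
      (ZMod.intCast_zmod_eq_zero_iff_dvd _ _).mp this
    rw [hkm] at hdvd
    push_cast at hdvd
    have hk' : (0:ℤ) < (k:ℤ) := by exact_mod_cast hk
    exact (mul_dvd_mul_iff_left hk'.ne').mp hdvd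
  rw [hsub] at hord
  -- in every case, the divisor is at least α²β², forcing d = 0
  have hd0 : d = 0 := by
    have hαβ2 : (α:ℤ)^2 ≤ (β:ℤ)^2 := by
      have : α ≤ β := le_of_lt hαβ
      exact_mod_cast Nat.pow_le_pow_left this 2
    have hβγ2 : (β:ℤ)^2 ≤ (γ:ℤ)^2 := by
      have : β ≤ γ := le_of_lt hβγ
      exact_mod_cast Nat.pow_le_pow_left this 2
    rcases hord with h | h | h
    · have hdvd := key (α ^ 2) (β ^ 2 * γ ^ 2) (by ring) (by positivity) h
      push_cast at hdvd
      refine Int.eq_zero_of_abs_lt_dvd hdvd ?_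
      calc |d| < (α : ℤ) ^ 2 * β ^ 2 := habs
        _ ≤ (β:ℤ)^2 * γ^2 := by nlinarith
    · have hdvd := key (β ^ 2) (α ^ 2 * γ ^ 2) (by ring) (by positivity) h
      push_cast at hdvd
      refine Int.eq_zero_of_abs_lt_dvd hdvd ?_
      calc |d| < (α : ℤ) ^ 2 * β ^ 2 := habs
        _ ≤ (α:ℤ)^2 * γ^2 := by nlinarith
    · have hdvd := key (γ ^ 2) (α ^ 2 * β ^ 2) (by ring) (by positivity) h
      push_cast at hdvd
      exact Int.eq_zero_of_abs_lt_dvd hdvd habs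
  apply hne
  have : ((i + j * α ^ 2 + t * α ^ 2 * β ^ 2 : ℕ) : ZMod (α ^ 2 * β ^ 2 * γ ^ 2))
      - ((i' + j' * α ^ 2 + t * α ^ 2 * β ^ 2 : ℕ) : ZMod (α ^ 2 * β ^ 2 * γ ^ 2)) = 0 := by
    rw [hsub, hd0]; simp
  exact sub_eq_zero.mp this
end

section
/- For all natural numbers r, s with 0 ≤ r ≤ α² − 1, 0 ≤ s ≤ β² − 1 and (r, s) ≠ (0, 0), the set {(r + s·α² + k·α²·β² : ZMod n) : 0 ≤ k ≤ γ² − 1} contains exactly one element of the set A = {(k·γ² : ZMod n) : 1 ≤ k ≤ α²·β² − 1}. -/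
/-!
Put `m = α²β²`, `c = γ²` and `x = r + sα² ∈ (0, m)`. Inside `ZMod (m c)` the first set is the
residue class of `x` modulo `m` and the set `A` consists of the nonzero multiples of `c`. Since
`x ≢ 0 (mod m)`, their intersection is the set of solutions of `z ≡ x (mod m)`, `z ≡ 0 (mod c)`,
which is a single point by the Chinese remainder theorem because `γ` is coprime to `αβ`.
-/

namespace ZMod

variable {m c : ℕ}

theorem eq_natCast_iff_modEq_and_modEq [NeZero (m * c)] (h : m.Coprime c) (z : ZMod (m * c))
    (k : ℕ) : z = k ↔ z.val ≡ k [MOD m] ∧ z.val ≡ k [MOD c] := by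
  rw [Nat.modEq_and_modEq_iff_modEq_mul h, ← natCast_eq_natCast_iff, natCast_zmod_val]

theorem ncard_setOf_val_modEq_and_modEq_eq_one [NeZero (m * c)] (h : m.Coprime c) (x y : ℕ) :
    {z : ZMod (m * c) | z.val ≡ x [MOD m] ∧ z.val ≡ y [MOD c]}.ncard = 1 := by
  obtain ⟨k, hkx, hky⟩ := Nat.chineseRemainder h x y
  refine Set.ncard_eq_one.mpr ⟨k, Set.ext fun z => ?_⟩
  rw [Set.mem_singleton_iff, eq_natCast_iff_modEq_and_modEq h]
  exact and_congr ⟨fun hz => hz.trans hkx.symm, fun hz => hz.trans hkx⟩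
    ⟨fun hz => hz.trans hky.symm, fun hz => hz.trans hky⟩

theorem setOf_exists_eq_natCast_add_mul {x : ℕ} (hx : x < m) (hc : 0 < c) :
    {z : ZMod (m * c) | ∃ k : ℕ, k ≤ c - 1 ∧ z = ((x + k * m : ℕ) : ZMod (m * c))} =
      {z | z.val ≡ x [MOD m]} := by
  have : NeZero (m * c) := ⟨Nat.mul_ne_zero (by omega) hc.ne'⟩
  ext z
  constructor
  · rintro ⟨k, -, rfl⟩
    rw [Set.mem_ofPred_eq, val_natCast, Nat.ModEq, Nat.mod_mul_right_mod,
      Nat.add_mul_mod_self_right]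
  · intro hz
    have hzm : z.val % m = x := Eq.trans hz (Nat.mod_eq_of_lt hx)
    refine ⟨z.val / m, ?_, ?_⟩
    · have := Nat.div_lt_of_lt_mul z.val_lt
      omega
    · rw [← hzm, Nat.mod_add_div', natCast_zmod_val]

theorem setOf_exists_eq_natCast_mul (hm : 0 < m) (hc : 0 < c) :
    {z : ZMod (m * c) | ∃ j : ℕ, 1 ≤ j ∧ j ≤ m - 1 ∧ z = ((j * c : ℕ) : ZMod (m * c))} =
      {z | z.val ≡ 0 [MOD c] ∧ z ≠ 0} := by
  have : NeZero (m * c) := ⟨by positivity⟩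
  ext z
  constructor
  · rintro ⟨j, hj1, hjm, rfl⟩
    have hlt : j * c < m * c := Nat.mul_lt_mul_of_pos_right (by omega) hc
    rw [Set.mem_ofPred_eq, ← val_pos, val_natCast, Nat.mod_eq_of_lt hlt]
    exact ⟨Nat.mul_mod_left j c, Nat.mul_pos (by omega) hc⟩
  · rintro ⟨hzc, hz0⟩
    obtain ⟨j, hj⟩ := Nat.dvd_of_mod_eq_zero hzc
    have hzpos : 0 < z.val := val_pos.mpr hz0
    have hjm : j < m := by
      have := z.val_lt
      rw [hj, mul_comm m c] at this
      exact Nat.lt_of_mul_lt_mul_left this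
    refine ⟨j, Nat.pos_of_ne_zero ?_, by omega, ?_⟩
    · rintro rfl
      omega
    · rw [Nat.mul_comm j c, ← hj, natCast_zmod_val]

theorem ncard_setOf_exists_eq_natCast_add_mul_inter_eq_one (h : m.Coprime c) {x : ℕ}
    (hx0 : 0 < x) (hx : x < m) (hc : 0 < c) :
    ({z : ZMod (m * c) | ∃ k : ℕ, k ≤ c - 1 ∧ z = ((x + k * m : ℕ) : ZMod (m * c))} ∩
      {z : ZMod (m * c) | ∃ j : ℕ, 1 ≤ j ∧ j ≤ m - 1 ∧ z = ((j * c : ℕ) : ZMod (m * c))}).ncard =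
      1 := by
  have : NeZero (m * c) := ⟨Nat.mul_ne_zero (by omega) hc.ne'⟩
  rw [setOf_exists_eq_natCast_add_mul hx hc, setOf_exists_eq_natCast_mul (by omega) hc,
    ← ncard_setOf_val_modEq_and_modEq_eq_one h x 0]
  congr 1
  ext z
  simp only [Set.mem_inter_iff, Set.mem_ofPred_eq]
  refine ⟨fun ⟨hzx, hzc, _⟩ => ⟨hzx, hzc⟩, fun ⟨hzx, hzc⟩ => ⟨hzx, hzc, ?_⟩⟩
  rintro rfl
  rw [val_zero, Nat.ModEq, Nat.zero_mod, Nat.mod_eq_of_lt hx] at hzx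
  omega

end ZMod

theorem stmt_3_general (α β γ : ℕ) (hα : α.Prime) (hγ : γ.Prime)
    (hαβ : α < β) (hβγ : β < γ) (r s : ℕ)
    (hr : r ≤ α ^ 2 - 1) (hs : s ≤ β ^ 2 - 1) (hrs : (r, s) ≠ (0, 0)) :
    ({z : ZMod (α ^ 2 * β ^ 2 * γ ^ 2) | ∃ k : ℕ, k ≤ γ ^ 2 - 1 ∧
        z = ((r + s * α ^ 2 + k * α ^ 2 * β ^ 2 : ℕ) : ZMod (α ^ 2 * β ^ 2 * γ ^ 2))} ∩
      {z : ZMod (α ^ 2 * β ^ 2 * γ ^ 2) | ∃ k : ℕ, 1 ≤ k ∧ k ≤ α ^ 2 * β ^ 2 - 1 ∧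
        z = ((k * γ ^ 2 : ℕ) : ZMod (α ^ 2 * β ^ 2 * γ ^ 2))}).ncard = 1 := by
  have hα2 : 0 < α ^ 2 := pow_pos hα.pos 2
  have hβ2 : 0 < β ^ 2 := pow_pos (by omega) 2
  have hcop : (α ^ 2 * β ^ 2).Coprime (γ ^ 2) := by
    have hγα : γ.Coprime α := Nat.coprime_of_lt_prime hα.ne_zero (by omega) hγ
    have hγβ : γ.Coprime β := Nat.coprime_of_lt_prime (by omega) hβγ hγ
    exact ((hγα.pow 2 2).mul_right (hγβ.pow 2 2)).symm
  have hx0 : 0 < r + s * α ^ 2 := by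
    rcases Nat.eq_zero_or_pos s with rfl | hs0
    · simpa [Nat.pos_iff_ne_zero] using hrs
    · exact Nat.add_pos_right r (Nat.mul_pos hs0 hα2)
  have hx : r + s * α ^ 2 < α ^ 2 * β ^ 2 := by
    rw [mul_comm s]
    exact Nat.add_mul_lt_mul_of_lt_of_lt (by omega) (by omega)
  simpa only [Nat.mul_assoc] using
    ZMod.ncard_setOf_exists_eq_natCast_add_mul_inter_eq_one hcop hx0 hx (pow_pos hγ.pos 2)

theorem stmt_3 (α β γ : ℕ) (hα : α.Prime) (hβ : β.Prime) (hγ : γ.Prime)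
    (hαβ : α < β) (hβγ : β < γ) (r s : ℕ)
    (hr : r ≤ α ^ 2 - 1) (hs : s ≤ β ^ 2 - 1) (hrs : (r, s) ≠ (0, 0)) :
    ({z : ZMod (α ^ 2 * β ^ 2 * γ ^ 2) | ∃ k : ℕ, k ≤ γ ^ 2 - 1 ∧
        z = ((r + s * α ^ 2 + k * α ^ 2 * β ^ 2 : ℕ) : ZMod (α ^ 2 * β ^ 2 * γ ^ 2))} ∩
      {z : ZMod (α ^ 2 * β ^ 2 * γ ^ 2) | ∃ k : ℕ, 1 ≤ k ∧ k ≤ α ^ 2 * β ^ 2 - 1 ∧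
        z = ((k * γ ^ 2 : ℕ) : ZMod (α ^ 2 * β ^ 2 * γ ^ 2))}).ncard = 1 :=
  stmt_3_general α β γ hα hγ hαβ hβγ r s hr hs hrs
end

section
/- The girth of the graph Cay(G,C) equals 3, i.e., the length of a shortest cycle in Cay(G,C) is 3. -/
theorem stmt_5 (α β γ : ℕ) (hα : α.Prime) (hβ : β.Prime) (hγ : γ.Prime)
    (hαβ : α < β) (hβγ : β < γ) :
    (cayP2 (α ^ 2 * β ^ 2 * γ ^ 2) α β γ).girth = 3 := by
  set n := α ^ 2 * β ^ 2 * γ ^ 2 with hn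
  set G := cayP2 n α β γ with hG
  have hα2 : 2 ≤ α := hα.two_le
  have hβ2 : 2 ≤ β := hβ.two_le
  have hγ2 : 2 < γ := by omega
  have hn0 : n ≠ 0 := by positivity
  have hm0 : 0 < α ^ 2 * β ^ 2 := by positivity
  have hγcop2 : Nat.Coprime γ 2 := (Nat.coprime_primes hγ Nat.prime_two).mpr (by omega)
  -- the key element
  set a : ZMod n := ((α ^ 2 * β ^ 2 : ℕ) : ZMod n) with ha
  have hgcd1 : n.gcd (α ^ 2 * β ^ 2) = α ^ 2 * β ^ 2 := by
    have : n = (α ^ 2 * β ^ 2) * γ ^ 2 := by ring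
    rw [this]
    exact Nat.gcd_eq_right ⟨γ ^ 2, by ring⟩
  have hordA : addOrderOf a = γ ^ 2 := by
    rw [ha, ZMod.addOrderOf_coe _ hn0, hgcd1, hn, show α ^ 2 * β ^ 2 * γ ^ 2 = (α ^ 2 * β ^ 2) * γ ^ 2 by ring]
    exact Nat.mul_div_cancel_left _ hm0
  have h2cast : a + a = ((2 * (α ^ 2 * β ^ 2) : ℕ) : ZMod n) := by
    rw [ha]; push_cast; ring
  have hgcd2 : n.gcd (2 * (α ^ 2 * β ^ 2)) = α ^ 2 * β ^ 2 := by
    have h1 : n = (α ^ 2 * β ^ 2) * γ ^ 2 := by ring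
    have h2 : 2 * (α ^ 2 * β ^ 2) = (α ^ 2 * β ^ 2) * 2 := by ring
    rw [h1, h2, Nat.gcd_mul_left]
    have : Nat.gcd (γ ^ 2) 2 = 1 := Nat.Coprime.pow_left 2 hγcop2
    rw [this, mul_one]
  have hordB : addOrderOf (a + a) = γ ^ 2 := by
    rw [h2cast, ZMod.addOrderOf_coe _ hn0, hgcd2, hn, show α ^ 2 * β ^ 2 * γ ^ 2 = (α ^ 2 * β ^ 2) * γ ^ 2 by ring]
    exact Nat.mul_div_cancel_left _ hm0
  have hγsq : γ ^ 2 ≠ 1 := by nlinarith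
  have hane : a ≠ 0 := by
    intro h
    rw [h, addOrderOf_zero] at hordA
    exact hγsq hordA.symm
  have h2ane : a + a ≠ 0 := by
    intro h
    rw [h, addOrderOf_zero] at hordB
    exact hγsq hordB.symm
  have hne12 : a ≠ a + a := by
    intro h
    apply hane
    have := congrArg (· - a) h
    simpa using this.symm
  -- adjacencies
  have h01 : G.Adj 0 a := by
    refine ⟨Ne.symm hane, Or.inr (Or.inr ?_)⟩
    rw [zero_sub, addOrderOf_neg, hordA]
  have h12 : G.Adj a (a + a) := by
    refine ⟨hne12, Or.inr (Or.inr ?_)⟩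
    rw [show a - (a + a) = -a by ring, addOrderOf_neg, hordA]
  have h20 : G.Adj (a + a) 0 := by
    refine ⟨h2ane, Or.inr (Or.inr ?_)⟩
    rw [sub_zero, hordB]
  -- the triangle
  set w : G.Walk 0 0 :=
    SimpleGraph.Walk.cons h01 (SimpleGraph.Walk.cons h12 (SimpleGraph.Walk.cons h20 SimpleGraph.Walk.nil)) with hw
  have hcyc : w.IsCycle := by
    rw [hw, SimpleGraph.Walk.cons_isCycle_iff]
    constructor
    · rw [SimpleGraph.Walk.isPath_def]
      simp [hne12, hane, h2ane, hane.symm, h2ane.symm]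
    · simp only [SimpleGraph.Walk.edges_cons, SimpleGraph.Walk.edges_nil, List.mem_cons,
        List.not_mem_nil, or_false, Sym2.eq, Sym2.rel_iff', Prod.mk.injEq, Prod.swap_prod_mk]
      push_neg
      exact ⟨⟨fun _ => hne12, fun h => (h2ane h.symm).elim⟩, fun h => (h2ane h.symm).elim, fun _ => hne12⟩
  have hlen : w.length = 3 := by simp [hw]
  have hegirth : G.egirth = 3 := by
    refine le_antisymm ?_ SimpleGraph.three_le_egirth
    have : G.egirth ≤ (w.length : ℕ∞) := by
      rw [SimpleGraph.egirth]
      exact iInf_le_of_le 0 (iInf_le_of_le w (iInf_le_of_le hcyc le_rfl))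
    rw [hlen] at this
    exact_mod_cast this
  rw [SimpleGraph.girth, hegirth]
  rfl
end

section
/- The graph Cay(G,C) is connected. -/
/-- Translation is a graph homomorphism of `cayP2`. -/
def cayP2.translate (n α β γ : ℕ) (w : ZMod n) :
    cayP2 n α β γ →g cayP2 n α β γ where
  toFun v := v + w
  map_rel' := by
    rintro a b ⟨hab, h⟩
    refine ⟨by simpa using hab, ?_⟩
    rwa [show a + w - (b + w) = a - b by ring]

lemma cayP2.reach_translate {n α β γ : ℕ} {y : ZMod n} (x : ZMod n)
    (h : (cayP2 n α β γ).Reachable 0 y) :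
    (cayP2 n α β γ).Reachable x (x + y) := by
  have h' := h.map (cayP2.translate n α β γ x)
  have h0 : (cayP2.translate n α β γ x) 0 = x := zero_add x
  have hy : (cayP2.translate n α β γ x) y = x + y := add_comm y x
  rwa [h0, hy] at h'

lemma cayP2.reach_zsmul {n α β γ : ℕ} {c : ZMod n}
    (hc : addOrderOf c = α ^ 2 ∨ addOrderOf c = β ^ 2 ∨ addOrderOf c = γ ^ 2)
    (hc1 : addOrderOf c ≠ 1) (k : ℤ) :
    (cayP2 n α β γ).Reachable 0 (k • c) := by
  have hc0 : c ≠ 0 := by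
    intro h; apply hc1; rw [h, addOrderOf_zero]
  induction k using Int.induction_on with
  | zero => simp [SimpleGraph.Reachable.refl]
  | succ k ih =>
    refine ih.trans (SimpleGraph.Adj.reachable ?_)
    constructor
    · intro h
      apply hc0
      have : ((k : ℤ) + 1) • c - (k : ℤ) • c = 0 := by rw [← h]; ring
      rwa [add_smul, one_smul, add_sub_cancel_left] at this
    · rw [show (k : ℤ) • c - ((k : ℤ) + 1) • c = -c by rw [add_smul, one_smul]; ring,
        addOrderOf_neg]
      exact hc
  | pred k ih =>
    refine ih.trans (SimpleGraph.Adj.reachable ?_)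
    constructor
    · intro h
      apply hc0
      have : (-(k : ℤ)) • c - (-(k : ℤ) - 1) • c = 0 := by rw [h]; ring
      rwa [sub_smul, one_smul, sub_sub_cancel] at this
    · rw [show (-(k : ℤ)) • c - (-(k : ℤ) - 1) • c = c by rw [sub_smul, one_smul]; ring]
      exact hc

theorem stmt_6 (α β γ : ℕ) (hα : α.Prime) (hβ : β.Prime) (hγ : γ.Prime)
    (hαβ : α < β) (hβγ : β < γ) :
    (cayP2 (α ^ 2 * β ^ 2 * γ ^ 2) α β γ).Connected := by
  set n := α ^ 2 * β ^ 2 * γ ^ 2 with hn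
  have hα0 : α ≠ 0 := hα.ne_zero
  have hβ0 : β ≠ 0 := hβ.ne_zero
  have hγ0 : γ ≠ 0 := hγ.ne_zero
  have hn0 : n ≠ 0 := by positivity
  -- the three generators
  set g₁ : ZMod n := ((β ^ 2 * γ ^ 2 : ℕ) : ZMod n) with hg₁
  set g₂ : ZMod n := ((α ^ 2 * γ ^ 2 : ℕ) : ZMod n) with hg₂
  set g₃ : ZMod n := ((α ^ 2 * β ^ 2 : ℕ) : ZMod n) with hg₃
  have ho₁ : addOrderOf g₁ = α ^ 2 := by
    rw [hg₁, ZMod.addOrderOf_coe _ hn0,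
      Nat.gcd_eq_right ⟨α ^ 2, by ring⟩, hn]
    rw [show α ^ 2 * β ^ 2 * γ ^ 2 = (β ^ 2 * γ ^ 2) * α ^ 2 by ring]
    exact Nat.mul_div_cancel_left _ (by positivity)
  have ho₂ : addOrderOf g₂ = β ^ 2 := by
    rw [hg₂, ZMod.addOrderOf_coe _ hn0,
      Nat.gcd_eq_right ⟨β ^ 2, by ring⟩, hn]
    rw [show α ^ 2 * β ^ 2 * γ ^ 2 = (α ^ 2 * γ ^ 2) * β ^ 2 by ring]
    exact Nat.mul_div_cancel_left _ (by positivity)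
  have ho₃ : addOrderOf g₃ = γ ^ 2 := by
    rw [hg₃, ZMod.addOrderOf_coe _ hn0,
      Nat.gcd_eq_right ⟨γ ^ 2, by ring⟩, hn]
    rw [show α ^ 2 * β ^ 2 * γ ^ 2 = (α ^ 2 * β ^ 2) * γ ^ 2 by ring]
    exact Nat.mul_div_cancel_left _ (by positivity)
  have h1 : (1:ℕ) < α ^ 2 := Nat.one_lt_pow (by norm_num) hα.one_lt
  have h2 : (1:ℕ) < β ^ 2 := Nat.one_lt_pow (by norm_num) hβ.one_lt
  have h3 : (1:ℕ) < γ ^ 2 := Nat.one_lt_pow (by norm_num) hγ.one_lt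
  have hr₁ : ∀ k : ℤ, (cayP2 n α β γ).Reachable 0 (k • g₁) :=
    cayP2.reach_zsmul (Or.inl ho₁) (by rw [ho₁]; omega)
  have hr₂ : ∀ k : ℤ, (cayP2 n α β γ).Reachable 0 (k • g₂) :=
    cayP2.reach_zsmul (Or.inr (Or.inl ho₂)) (by rw [ho₂]; omega)
  have hr₃ : ∀ k : ℤ, (cayP2 n α β γ).Reachable 0 (k • g₃) :=
    cayP2.reach_zsmul (Or.inr (Or.inr ho₃)) (by rw [ho₃]; omega)
  -- Bezout identities
  have cop1 : IsCoprime (α ^ 2 : ℤ) ((β ^ 2 : ℤ) * γ ^ 2) := by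
    have : Nat.Coprime (α ^ 2) (β ^ 2 * γ ^ 2) :=
      (Nat.Coprime.pow 2 2 ((Nat.coprime_primes hα hβ).mpr hαβ.ne)).mul_right
        ((Nat.Coprime.pow 2 2 ((Nat.coprime_primes hα hγ).mpr (hαβ.trans hβγ).ne)))
    have := Nat.isCoprime_iff_coprime.mpr this
    push_cast at this ⊢
    exact this
  have cop2 : IsCoprime ((γ : ℤ) ^ 2) ((β : ℤ) ^ 2) := by
    have : Nat.Coprime (γ ^ 2) (β ^ 2) :=
      Nat.Coprime.pow 2 2 ((Nat.coprime_primes hγ hβ).mpr hβγ.ne')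
    have := Nat.isCoprime_iff_coprime.mpr this
    push_cast at this ⊢
    exact this
  obtain ⟨a, b, hab⟩ := cop1
  obtain ⟨c, d, hcd⟩ := cop2
  -- every element is a ℤ-combination of g₁, g₂, g₃
  have key : ∀ x : ZMod n, ∃ k₁ k₂ k₃ : ℤ, x = k₁ • g₁ + k₂ • g₂ + k₃ • g₃ := by
    intro x
    haveI : NeZero n := ⟨hn0⟩
    set m : ℤ := (x.val : ℤ) with hm
    have hx : ((m : ℤ) : ZMod n) = x := by
      rw [hm]; push_cast; rw [ZMod.natCast_val, ZMod.cast_id]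
    refine ⟨m * b, m * a * c, m * a * d, ?_⟩
    have hZ : m = (m * b) * (β ^ 2 * γ ^ 2 : ℕ) + (m * a * c) * (α ^ 2 * γ ^ 2 : ℕ)
        + (m * a * d) * (α ^ 2 * β ^ 2 : ℕ) := by
      have : m = m * (a * α ^ 2 + b * (β ^ 2 * γ ^ 2)) := by rw [hab]; ring
      calc m = m * (a * α ^ 2 + b * (β ^ 2 * γ ^ 2)) := this
        _ = m * (a * ((c * γ ^ 2 + d * β ^ 2) * α ^ 2) + b * (β ^ 2 * γ ^ 2)) := by
            rw [hcd]; ring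
        _ = _ := by push_cast; ring
    have := congrArg (fun z : ℤ => ((z : ZMod n))) hZ
    simp only [hx] at this
    rw [this]
    push_cast [zsmul_eq_mul, hg₁, hg₂, hg₃]
    ring
  constructor
  · intro u v
    have reach0 : ∀ x : ZMod n, (cayP2 n α β γ).Reachable 0 x := by
      intro x
      obtain ⟨k₁, k₂, k₃, hx⟩ := key x
      rw [hx]
      refine (hr₁ k₁).trans ?_
      refine (cayP2.reach_translate _ (hr₂ k₂)).trans ?_
      exact cayP2.reach_translate _ (hr₃ k₃)
    exact (reach0 u).symm.trans (reach0 v)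
end

section
/- The graph Cay(G,C) is Eulerian: there exists a closed walk in Cay(G,C) that traverses every edge of the graph exactly once. -/
open SimpleGraph



namespace EulerAux

variable {V : Type*} [DecidableEq V] {G : SimpleGraph V}

/-- crossing lemma: a walk from outside S to inside S crosses the boundary. -/
lemma crossing {a b : V} (q : G.Walk a b) (S : Set V) (ha : a ∉ S) (hb : b ∈ S) :
    ∃ x y, G.Adj y x ∧ x ∈ S ∧ y ∉ S := by
  induction q with
  | nil => exact absurd hb ha
  | cons h q ih =>
    rename_i u w c
    by_cases hw : w ∈ S
    · exact ⟨w, u, h, hw, ha⟩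
    · exact ih hw hb

lemma trail_length_le [Fintype V] [DecidableRel G.Adj] {u v : V} {p : G.Walk u v}
    (hp : p.IsTrail) : p.length ≤ G.edgeFinset.card := by
  rw [← Walk.length_edges]
  rw [← List.toFinset_card_of_nodup hp.edges_nodup]
  apply Finset.card_le_card
  intro e he
  rw [List.mem_toFinset] at he
  rw [mem_edgeFinset]
  exact p.edges_subset_edgeSet he

theorem euler_of_even [Fintype V] [DecidableRel G.Adj] (hpre : G.Preconnected)
    (heven : ∀ v, Even (G.degree v)) (v0 : V) :
    ∃ (v : V) (w : G.Walk v v), w.IsEulerian := by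
  classical
  set S : Set ℕ := {k | ∃ (a : V) (b : V) (p : G.Walk a b), p.IsTrail ∧ p.length = k} with hS
  have h0 : (0 : ℕ) ∈ S := ⟨v0, v0, Walk.nil, Walk.IsTrail.nil, rfl⟩
  have hbdd : BddAbove S := by
    refine ⟨G.edgeFinset.card, ?_⟩
    rintro k ⟨a, b, p, hp, rfl⟩
    exact trail_length_le hp
  obtain ⟨a, b, p, hp, hlen⟩ := Nat.sSup_mem ⟨0, h0⟩ hbdd
  have hmax : ∀ {c d : V} (q : G.Walk c d), q.IsTrail → q.length ≤ p.length := by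
    intro c d q hq
    rw [hlen]
    exact le_csSup hbdd ⟨c, d, q, hq, rfl⟩
  -- Step 1: the maximal trail is closed
  have hab : a = b := by
    by_contra hne
    -- the number of edges of p at b is odd
    have hodd : ¬ Even (p.edges.countP fun e => b ∈ e) := by
      rw [hp.even_countP_edges_iff b]
      simp [hne]
    -- it is at most the degree of b
    have hsub : (p.edges.filter fun e => b ∈ e).toFinset ⊆ G.incidenceFinset b := by
      intro e he
      rw [List.mem_toFinset, List.mem_filter] at he
      rw [mem_incidenceFinset]
      exact ⟨p.edges_subset_edgeSet he.1, by simpa using he.2⟩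
    have hcount : (p.edges.countP fun e => b ∈ e) =
        (p.edges.filter fun e => b ∈ e).toFinset.card := by
      rw [List.toFinset_card_of_nodup (hp.edges_nodup.filter _), List.countP_eq_length_filter]
    have hlt : (p.edges.filter fun e => b ∈ e).toFinset ≠ G.incidenceFinset b := by
      intro h
      apply hodd
      rw [hcount, h, card_incidenceFinset_eq_degree]
      exact heven b
    obtain ⟨e, he1, he2⟩ := Finset.exists_of_ssubset (hsub.ssubset_of_ne hlt)
    rw [mem_incidenceFinset, incidenceSet] at he1
    obtain ⟨heE, heb⟩ := he1
    obtain ⟨c, rfl⟩ := Sym2.mem_iff_exists.mp heb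
    have hadj : G.Adj b c := heE
    have henotin : s(b, c) ∉ p.edges := by
      intro h
      exact he2 (by rw [List.mem_toFinset, List.mem_filter]; exact ⟨h, by simp⟩)
    have htrail : (p.concat hadj).IsTrail := by
      rw [Walk.isTrail_def, Walk.edges_concat]
      exact List.Nodup.concat henotin hp.edges_nodup
    have := hmax _ htrail
    rw [Walk.length_concat] at this
    omega
  subst hab
  -- Step 2: the maximal closed trail is Eulerian
  refine ⟨a, p, hp.isEulerian_of_forall_mem ?_⟩
  by_contra hcon
  push_neg at hcon
  obtain ⟨e, heE, hep⟩ := hcon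
  induction e with
  | h x y =>
  -- find an unused edge incident to the support of p
  have key : ∃ (c d : V) (h : G.Adj c d), c ∈ p.support ∧ s(c, d) ∉ p.edges := by
    by_cases hx : x ∈ p.support
    · exact ⟨x, y, heE, hx, hep⟩
    · obtain ⟨c, d, hadj, hc, hd⟩ := crossing ((hpre x a).some)
        {z | z ∈ p.support} hx p.start_mem_support
      refine ⟨c, d, hadj.symm, hc, fun h => hd ?_⟩
      rw [Sym2.eq_swap] at h
      exact p.fst_mem_support_of_mem_edges h
  obtain ⟨c, d, hadj, hc, hcd⟩ := key
  have htrail : ((p.rotate (u := c) hc).concat hadj).IsTrail := by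
    rw [Walk.isTrail_def, Walk.edges_concat]
    refine List.Nodup.concat (fun h => hcd ?_) (hp.rotate (u := c) hc).edges_nodup
    exact ((p.rotate_edges (u := c) hc).perm.mem_iff).mp h
  have hle := hmax _ htrail
  have hrot : (p.rotate (u := c) hc).length = p.length := by
    rw [← Walk.length_edges, ← Walk.length_edges]
    exact (p.rotate_edges (u := c) hc).perm.length_eq
  rw [Walk.length_concat, hrot] at hle
  omega

end EulerAux


namespace EulerAux

lemma even_card_invol {α : Type*} [DecidableEq α] (s : Finset α) (f : α → α)
    (h1 : ∀ x ∈ s, f x ∈ s) (h2 : ∀ x ∈ s, f (f x) = x) (h3 : ∀ x ∈ s, f x ≠ x) :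
    Even s.card := by
  classical
  induction s using Finset.strongInduction with
  | _ s ih =>
    rcases s.eq_empty_or_nonempty with rfl | ⟨a, ha⟩
    · simp
    · have hfa : f a ∈ s := h1 a ha
      have hne : f a ≠ a := h3 a ha
      set t := s \ {a, f a} with ht
      have hsub : t ⊂ s := by
        refine Finset.ssubset_iff_of_subset (Finset.sdiff_subset) |>.mpr ⟨a, ha, by simp [ht]⟩
      have hcard : s.card = t.card + 2 := by
        have : ({a, f a} : Finset α) ⊆ s := by
          intro z hz; simp at hz; rcases hz with rfl | rfl <;> assumption
        have hp : ({a, f a} : Finset α).card = 2 := Finset.card_pair (Ne.symm hne)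
        have hle := Finset.card_le_card this
        rw [ht, Finset.card_sdiff_of_subset this]
        omega
      have heven : Even t.card := by
        refine ih t hsub (fun x hx => ?_) (fun x hx => h2 x (Finset.mem_sdiff.mp hx).1)
          (fun x hx => h3 x (Finset.mem_sdiff.mp hx).1)
        rw [ht, Finset.mem_sdiff] at hx ⊢
        obtain ⟨hxs, hxn⟩ := hx
        simp only [Finset.mem_insert, Finset.mem_singleton] at hxn ⊢
        push_neg at hxn ⊢
        refine ⟨h1 x hxs, fun h => hxn.2 ?_, fun h => hxn.1 ?_⟩
        · rw [← h2 x hxs, h]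
        · rw [← h2 x hxs, h, h2 a ha]
      rw [hcard]
      exact heven.add even_two

def shiftHom (n α β γ : ℕ) (t : ZMod n) : cayP2 n α β γ →g cayP2 n α β γ where
  toFun z := z + t
  map_rel' := by
    rintro a b ⟨h1, h2⟩
    refine ⟨by simpa using h1, ?_⟩
    rwa [show a + t - (b + t) = a - b by ring]

@[simp] lemma shiftHom_apply (n α β γ : ℕ) (t z : ZMod n) :
    shiftHom n α β γ t z = z + t := rfl

theorem main (α β γ : ℕ) (hα : α.Prime) (hβ : β.Prime) (hγ : γ.Prime)
    (hαβ : α < β) (hβγ : β < γ) :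
    ∃ (v : ZMod (α ^ 2 * β ^ 2 * γ ^ 2))
      (w : (cayP2 (α ^ 2 * β ^ 2 * γ ^ 2) α β γ).Walk v v), w.IsEulerian := by
  classical
  have hα2 := hα.two_le
  have hβ2 := hβ.two_le
  have hγ2 := hγ.two_le
  set n := α ^ 2 * β ^ 2 * γ ^ 2 with hn
  have hnpos : 0 < n := by
    exact Nat.mul_pos (Nat.mul_pos (pow_pos hα.pos 2) (pow_pos hβ.pos 2)) (pow_pos hγ.pos 2)
  haveI : NeZero n := ⟨hnpos.ne'⟩
  haveI : DecidableRel (cayP2 n α β γ).Adj := Classical.decRel _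
  set G := cayP2 n α β γ with hG
  -- even degrees
  have heven : ∀ v : ZMod n, Even (G.degree v) := by
    intro v
    show Even (G.neighborFinset v).card
    apply even_card_invol _ (fun y => v + v - y)
    · intro y hy
      rw [SimpleGraph.mem_neighborFinset] at hy ⊢
      obtain ⟨h1, h2⟩ := hy
      refine ⟨fun h => h1 (by linear_combination -h), ?_⟩
      rwa [show v - (v + v - y) = -(v - y) by ring, addOrderOf_neg]
    · intro y _; ring
    · intro y hy h
      rw [SimpleGraph.mem_neighborFinset] at hy
      obtain ⟨h1, h2⟩ := hy
      have h2' : 2 • (v - y) = 0 := by rw [two_nsmul]; linear_combination h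
      have hdvd : addOrderOf (v - y) ∣ 2 := addOrderOf_dvd_of_nsmul_eq_zero h2'
      have hle := Nat.le_of_dvd (by norm_num) hdvd
      rcases h2 with h2 | h2 | h2 <;> rw [h2] at hle <;> nlinarith
  -- connectivity
  have hpre : G.Preconnected := by
    set g : ZMod n := ((β ^ 2 * γ ^ 2 : ℕ) : ZMod n) with hg
    set h' : ZMod n := ((α ^ 2 * γ ^ 2 : ℕ) : ZMod n) with hh'
    set k : ZMod n := ((α ^ 2 * β ^ 2 : ℕ) : ZMod n) with hk
    have hog : addOrderOf g = α ^ 2 := by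
      rw [hg, ZMod.addOrderOf_coe _ hnpos.ne',
        Nat.gcd_eq_right ⟨α ^ 2, by ring⟩, hn, mul_assoc]
      exact Nat.mul_div_cancel _ (by positivity)
    have hoh : addOrderOf h' = β ^ 2 := by
      rw [hh', ZMod.addOrderOf_coe _ hnpos.ne',
        Nat.gcd_eq_right ⟨β ^ 2, by ring⟩, show n = β ^ 2 * (α ^ 2 * γ ^ 2) by rw [hn]; ring]
      exact Nat.mul_div_cancel _ (by positivity)
    have hok : addOrderOf k = γ ^ 2 := by
      rw [hk, ZMod.addOrderOf_coe _ hnpos.ne',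
        Nat.gcd_eq_right ⟨γ ^ 2, by ring⟩, show n = γ ^ 2 * (α ^ 2 * β ^ 2) by rw [hn]; ring]
      exact Nat.mul_div_cancel _ (by positivity)
    have adjstep : ∀ (z w : ZMod n), addOrderOf w = α ^ 2 ∨ addOrderOf w = β ^ 2 ∨
        addOrderOf w = γ ^ 2 → G.Adj z (z + w) := by
      intro z w hw
      have hwne : w ≠ 0 := by
        intro h0
        rw [h0, addOrderOf_zero] at hw
        rcases hw with h | h | h <;> nlinarith
      refine ⟨fun h => hwne (by linear_combination -h), ?_⟩
      rw [show z - (z + w) = -w by ring, addOrderOf_neg]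
      exact hw
    set s : ZMod n := g + h' + k with hs
    have hstep : ∀ z : ZMod n, G.Reachable z (z + s) := by
      intro z
      have r1 := (adjstep z g (Or.inl hog)).reachable
      have r2 := (adjstep (z + g) h' (Or.inr (Or.inl hoh))).reachable
      have r3 := (adjstep (z + g + h') k (Or.inr (Or.inr hok))).reachable
      have : z + g + h' + k = z + s := by rw [hs]; ring
      rw [this] at r3
      exact (r1.trans r2).trans r3
    have hreach0 : ∀ m : ℕ, G.Reachable 0 (m • s) := by
      intro m
      induction m with
      | zero => simpa using SimpleGraph.Reachable.refl (0 : ZMod n)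
      | succ m ih => rw [succ_nsmul]; exact ih.trans (hstep _)
    -- s is a unit
    have hscast : s = ((β ^ 2 * γ ^ 2 + α ^ 2 * γ ^ 2 + α ^ 2 * β ^ 2 : ℕ) : ZMod n) := by
      rw [hs, hg, hh', hk]; push_cast; ring
    have hMα : ¬ α ∣ (β ^ 2 * γ ^ 2 + α ^ 2 * γ ^ 2 + α ^ 2 * β ^ 2) := by
      intro hdvd
      rw [show β ^ 2 * γ ^ 2 + α ^ 2 * γ ^ 2 + α ^ 2 * β ^ 2 =
        (α * (α * γ ^ 2) + α * (α * β ^ 2)) + β ^ 2 * γ ^ 2 by ring] at hdvd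
      have h2 : α ∣ β ^ 2 * γ ^ 2 :=
        (Nat.dvd_add_right (Dvd.dvd.add (Dvd.intro _ rfl) (Dvd.intro _ rfl))).mp hdvd
      rcases hα.dvd_mul.mp h2 with h | h
      · have := (Nat.prime_dvd_prime_iff_eq hα hβ).mp (hα.dvd_of_dvd_pow h); omega
      · have := (Nat.prime_dvd_prime_iff_eq hα hγ).mp (hα.dvd_of_dvd_pow h); omega
    have hMβ : ¬ β ∣ (β ^ 2 * γ ^ 2 + α ^ 2 * γ ^ 2 + α ^ 2 * β ^ 2) := by
      intro hdvd
      rw [show β ^ 2 * γ ^ 2 + α ^ 2 * γ ^ 2 + α ^ 2 * β ^ 2 =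
        (β * (β * γ ^ 2) + β * (β * α ^ 2)) + α ^ 2 * γ ^ 2 by ring] at hdvd
      have h2 : β ∣ α ^ 2 * γ ^ 2 :=
        (Nat.dvd_add_right (Dvd.dvd.add (Dvd.intro _ rfl) (Dvd.intro _ rfl))).mp hdvd
      rcases hβ.dvd_mul.mp h2 with h | h
      · have := (Nat.prime_dvd_prime_iff_eq hβ hα).mp (hβ.dvd_of_dvd_pow h); omega
      · have := (Nat.prime_dvd_prime_iff_eq hβ hγ).mp (hβ.dvd_of_dvd_pow h); omega
    have hMγ : ¬ γ ∣ (β ^ 2 * γ ^ 2 + α ^ 2 * γ ^ 2 + α ^ 2 * β ^ 2) := by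
      intro hdvd
      rw [show β ^ 2 * γ ^ 2 + α ^ 2 * γ ^ 2 + α ^ 2 * β ^ 2 =
        (γ * (γ * β ^ 2) + γ * (γ * α ^ 2)) + α ^ 2 * β ^ 2 by ring] at hdvd
      have h2 : γ ∣ α ^ 2 * β ^ 2 :=
        (Nat.dvd_add_right (Dvd.dvd.add (Dvd.intro _ rfl) (Dvd.intro _ rfl))).mp hdvd
      rcases hγ.dvd_mul.mp h2 with h | h
      · have := (Nat.prime_dvd_prime_iff_eq hγ hα).mp (hγ.dvd_of_dvd_pow h); omega
      · have := (Nat.prime_dvd_prime_iff_eq hγ hβ).mp (hγ.dvd_of_dvd_pow h); omega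
    have hcop : Nat.Coprime (β ^ 2 * γ ^ 2 + α ^ 2 * γ ^ 2 + α ^ 2 * β ^ 2) n := by
      rw [hn]
      refine Nat.Coprime.mul_right (Nat.Coprime.mul_right ?_ ?_) ?_
      · exact Nat.Coprime.pow_right _ (hα.coprime_iff_not_dvd.mpr hMα).symm
      · exact Nat.Coprime.pow_right _ (hβ.coprime_iff_not_dvd.mpr hMβ).symm
      · exact Nat.Coprime.pow_right _ (hγ.coprime_iff_not_dvd.mpr hMγ).symm
    have hunit : IsUnit s := by
      rw [hscast]
      exact (ZMod.isUnit_iff_coprime _ n).mpr hcop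
    have hall : ∀ x : ZMod n, G.Reachable 0 x := by
      intro x
      have hx : x = ((x * s⁻¹).val) • s := by
        rw [nsmul_eq_mul, ZMod.natCast_val, ZMod.cast_id, mul_assoc,
          ZMod.inv_mul_of_unit s hunit, mul_one]
      rw [hx]
      exact hreach0 _
    intro x y
    have hxy := (hall (y - x)).map (shiftHom n α β γ x)
    simpa using hxy
  obtain ⟨v, w, hw⟩ := euler_of_even hpre heven (0 : ZMod n)
  exact ⟨v, w, hw⟩

end EulerAux

theorem stmt_8 (α β γ : ℕ) (hα : α.Prime) (hβ : β.Prime) (hγ : γ.Prime)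
    (hαβ : α < β) (hβγ : β < γ) :
    ∃ (v : ZMod (α ^ 2 * β ^ 2 * γ ^ 2))
      (w : (cayP2 (α ^ 2 * β ^ 2 * γ ^ 2) α β γ).Walk v v), w.IsEulerian :=
  EulerAux.main α β γ hα hβ hγ hαβ hβγ
end

section
/- The clique number of the graph Cay(G,C) equals γ; that is, the maximum size of a set of pairwise adjacent vertices in Cay(G,C) is γ. -/
/-- If `addOrderOf z = p^2` in `ZMod n` with `p^2 ∣ n` but `¬ p^3 ∣ n`, then `p ∤ z.val`. -/
lemma aux_not_dvd_val {n p : ℕ} (hn : n ≠ 0) (hp : p.Prime) (hp2 : p ^ 2 ∣ n)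
    (hp3 : ¬ p ^ 3 ∣ n) {z : ZMod n} (hz : addOrderOf z = p ^ 2) : ¬ p ∣ z.val := by
  haveI : NeZero n := ⟨hn⟩
  intro hdvd
  rw [← ZMod.natCast_zmod_val z, ZMod.addOrderOf_coe _ hn] at hz
  have hg : n.gcd z.val ∣ n := Nat.gcd_dvd_left _ _
  have hne : n = n.gcd z.val * p ^ 2 := by
    rw [← hz]; exact (Nat.mul_div_cancel' hg).symm
  have hpg : p ∣ n.gcd z.val :=
    Nat.dvd_gcd (dvd_trans (dvd_pow_self p two_ne_zero) hp2) hdvd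
  apply hp3
  rw [hne, pow_succ, mul_comm (p ^ 2) p]
  exact mul_dvd_mul hpg dvd_rfl

lemma aux_not_cube {p m : ℕ} (hp : 0 < p) (hpm : ¬ p ∣ m) : ¬ p ^ 3 ∣ p ^ 2 * m := by
  intro h
  apply hpm
  have h' : p ^ 2 * p ∣ p ^ 2 * m := by rwa [← pow_succ]
  exact (Nat.mul_dvd_mul_iff_left (pow_pos hp 2)).mp h'

lemma aux_prime_not_dvd {p a b : ℕ} (hp : p.Prime) (ha : a.Prime) (hb : b.Prime)
    (hpa : p ≠ a) (hpb : p ≠ b) : ¬ p ∣ a ^ 2 * b ^ 2 := by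
  intro h
  rcases (Nat.Prime.dvd_mul hp).mp h with h' | h'
  · exact hpa ((Nat.prime_dvd_prime_iff_eq hp ha).mp (hp.dvd_of_dvd_pow h'))
  · exact hpb ((Nat.prime_dvd_prime_iff_eq hp hb).mp (hp.dvd_of_dvd_pow h'))

theorem stmt_9 (α β γ : ℕ) (hα : α.Prime) (hβ : β.Prime) (hγ : γ.Prime)
    (hαβ : α < β) (hβγ : β < γ) :
    (cayP2 (α ^ 2 * β ^ 2 * γ ^ 2) α β γ).cliqueNum = γ := by
  have hα0 : 0 < α := hα.pos
  have hβ0 : 0 < β := hβ.pos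
  have hγ0 : 0 < γ := hγ.pos
  have hα1 : 1 < α := hα.one_lt
  set n := α ^ 2 * β ^ 2 * γ ^ 2 with hn_def
  have hn : n ≠ 0 := by positivity
  haveI : NeZero n := ⟨hn⟩
  have hαβ' : α ≠ β := hαβ.ne
  have hβγ' : β ≠ γ := hβγ.ne
  have hαγ' : α ≠ γ := (hαβ.trans hβγ).ne
  have hα2 : α ^ 2 ∣ n := ⟨β ^ 2 * γ ^ 2, by ring⟩
  have hβ2 : β ^ 2 ∣ n := ⟨α ^ 2 * γ ^ 2, by ring⟩
  have hγ2 : γ ^ 2 ∣ n := ⟨α ^ 2 * β ^ 2, by ring⟩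
  have hα3 : ¬ α ^ 3 ∣ n := by
    rw [show n = α ^ 2 * (β ^ 2 * γ ^ 2) by ring]
    exact aux_not_cube hα0 (aux_prime_not_dvd hα hβ hγ hαβ' hαγ')
  have hβ3 : ¬ β ^ 3 ∣ n := by
    rw [show n = β ^ 2 * (α ^ 2 * γ ^ 2) by ring]
    exact aux_not_cube hβ0 (aux_prime_not_dvd hβ hα hγ hαβ'.symm hβγ')
  have hγ3 : ¬ γ ^ 3 ∣ n := by
    rw [show n = γ ^ 2 * (α ^ 2 * β ^ 2) by ring]
    exact aux_not_cube hγ0 (aux_prime_not_dvd hγ hα hβ hαγ'.symm hβγ'.symm)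
  -- the key upper bound: every clique has at most γ elements
  have upper : ∀ s : Finset (ZMod n), (cayP2 n α β γ).IsClique s → s.card ≤ γ := by
    intro s hs
    by_cases hcard : s.card ≤ 1
    · exact hcard.trans (by omega)
    push_neg at hcard
    obtain ⟨x0, hx0, x1, hx1, hx01⟩ := Finset.one_lt_card.mp hcard
    obtain ⟨-, htype⟩ := hs hx0 hx1 hx01
    obtain ⟨p, hp, hp2, hp3, hptype, hpγ⟩ :
        ∃ p : ℕ, p.Prime ∧ p ^ 2 ∣ n ∧ ¬ p ^ 3 ∣ n ∧
          addOrderOf (x0 - x1) = p ^ 2 ∧ p ≤ γ := by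
      rcases htype with h | h | h
      · exact ⟨α, hα, hα2, hα3, h, by omega⟩
      · exact ⟨β, hβ, hβ2, hβ3, h, by omega⟩
      · exact ⟨γ, hγ, hγ2, hγ3, h, le_rfl⟩
    -- different types among a triangle are impossible
    have key : ∀ x y z : ZMod n,
        (cayP2 n α β γ).Adj x z →
        ∀ P Q : ℕ, P.Prime → Q.Prime → P ≠ Q →
        addOrderOf (x - y) = P ^ 2 → addOrderOf (y - z) = Q ^ 2 → False := by
      intro x y z hadj P Q hP hQ hPQ h1 h2
      have hco : (addOrderOf (x - y)).Coprime (addOrderOf (y - z)) := by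
        rw [h1, h2]
        exact Nat.Coprime.pow _ _ ((Nat.coprime_primes hP hQ).mpr hPQ)
      have horder : addOrderOf (x - z) = P ^ 2 * Q ^ 2 := by
        rw [show x - z = (x - y) + (y - z) by ring,
          (AddCommute.all _ _).addOrderOf_add_eq_mul_addOrderOf_of_coprime hco, h1, h2]
      have hP1 : 1 < P := hP.one_lt
      have hQ1 : 1 < Q := hQ.one_lt
      have hcon : ∀ r : ℕ, r.Prime → addOrderOf (x - z) = r ^ 2 → False := by
        intro r hr hrr
        rw [horder, ← mul_pow] at hrr
        have hr' : P * Q = r := Nat.pow_left_injective (by omega) hrr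
        rcases Nat.prime_mul_iff.mp (hr' ▸ hr) with ⟨_, h⟩ | ⟨_, h⟩ <;> omega
      rcases hadj.2 with h | h | h
      · exact hcon α hα h
      · exact hcon β hβ h
      · exact hcon γ hγ h
    -- all pairs with x0 have type p
    have step2 : ∀ y ∈ s, y ≠ x0 → addOrderOf (x0 - y) = p ^ 2 := by
      intro y hy hyx0
      obtain ⟨-, hy_type⟩ := hs hx0 hy hyx0.symm
      obtain ⟨q, hq, hqtype⟩ : ∃ q : ℕ, q.Prime ∧ addOrderOf (x0 - y) = q ^ 2 := by
        rcases hy_type with h | h | h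
        exacts [⟨α, hα, h⟩, ⟨β, hβ, h⟩, ⟨γ, hγ, h⟩]
      by_cases hqp : q = p
      · rwa [hqp] at hqtype
      exfalso
      by_cases hy1 : y = x1
      · subst hy1; rw [hqtype] at hptype
        exact hqp (Nat.pow_left_injective (by omega) hptype)
      have h10 : addOrderOf (x1 - x0) = p ^ 2 := by
        rw [show x1 - x0 = -(x0 - x1) by ring, addOrderOf_neg, hptype]
      exact key x1 x0 y (hs hx1 hy (fun h => hy1 h.symm)) p q hp hq
        (fun h => hqp h.symm) h10 hqtype
    -- all pairs have type p
    have step3 : ∀ y ∈ s, ∀ z ∈ s, y ≠ z → addOrderOf (y - z) = p ^ 2 := by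
      intro y hy z hz hyz
      obtain ⟨-, hyz_type⟩ := hs hy hz hyz
      obtain ⟨q, hq, hqtype⟩ : ∃ q : ℕ, q.Prime ∧ addOrderOf (y - z) = q ^ 2 := by
        rcases hyz_type with h | h | h
        exacts [⟨α, hα, h⟩, ⟨β, hβ, h⟩, ⟨γ, hγ, h⟩]
      by_cases hqp : q = p
      · rwa [hqp] at hqtype
      exfalso
      by_cases hy0 : y = x0
      · have h2 := step2 z hz (fun h => hyz (hy0.trans h.symm))
        rw [← hy0, hqtype] at h2
        exact hqp (Nat.pow_left_injective (by omega) h2)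
      by_cases hz0 : z = x0
      · have h2 := step2 y hy hy0
        rw [show x0 - y = -(y - x0) by ring, addOrderOf_neg, ← hz0, hqtype] at h2
        exact hqp (Nat.pow_left_injective (by omega) h2)
      exact key x0 y z (hs hx0 hz (fun h => hz0 h.symm)) p q hp hq
        (fun h => hqp h.symm) (step2 y hy hy0) hqtype
    -- injection into ZMod p
    haveI : NeZero p := ⟨hp.ne_zero⟩
    have hpdvd : p ∣ n := dvd_trans (dvd_pow_self p two_ne_zero) hp2
    have hinj : Set.InjOn (fun x : ZMod n => ZMod.castHom hpdvd (ZMod p) x) s := by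
      intro x hx y hy hfxy
      by_contra hxy
      have horder := step3 x hx y hy hxy
      have hndvd := aux_not_dvd_val hn hp hp2 hp3 horder
      apply hndvd
      rw [← ZMod.natCast_eq_zero_iff]
      have : ((x - y).val : ZMod p) = ZMod.castHom hpdvd (ZMod p) (x - y) := by
        rw [ZMod.castHom_apply, ZMod.natCast_val]
      rw [this, map_sub]
      simp only at hfxy
      rw [hfxy, sub_self]
    calc s.card ≤ (Finset.univ : Finset (ZMod p)).card := by
          apply Finset.card_le_card_of_injOn _ (fun _ _ => Finset.mem_univ _) hinj
      _ = p := by rw [Finset.card_univ, ZMod.card]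
      _ ≤ γ := hpγ
  -- the explicit clique of size γ
  set c : ℕ := α ^ 2 * β ^ 2 with hc_def
  have hc0 : 0 < c := by positivity
  have hnc : n = c * γ ^ 2 := by first | exact hn_def | (rw [hn_def, hc_def]; ring)
  have hlt : ∀ i : ℕ, i < γ → i * c < n := by
    intro i hi
    calc i * c < γ * c := (Nat.mul_lt_mul_right hc0).mpr hi
      _ ≤ γ ^ 2 * c := Nat.mul_le_mul_right c (Nat.le_self_pow two_ne_zero γ)
      _ = n := (mul_comm (γ ^ 2) c).trans hnc.symm
  have hinjcast : ∀ i j : ℕ, i < γ → j < γ →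
      ((i * c : ℕ) : ZMod n) = ((j * c : ℕ) : ZMod n) → i = j := by
    intro i j hi hj hij
    have h1 := ZMod.val_cast_of_lt (hlt i hi)
    have h2 := ZMod.val_cast_of_lt (hlt j hj)
    have : i * c = j * c := by rw [← h1, ← h2, hij]
    exact Nat.eq_of_mul_eq_mul_right hc0 this
  -- order of (d*c : ZMod n) is γ^2 for 0 < d < γ
  have horder_dc : ∀ d : ℕ, 0 < d → d < γ → addOrderOf ((d * c : ℕ) : ZMod n) = γ ^ 2 := by
    intro d hd0 hdγ
    rw [ZMod.addOrderOf_coe _ hn]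
    have hco : Nat.Coprime (γ ^ 2) d :=
      Nat.Coprime.pow_left 2 ((Nat.Prime.coprime_iff_not_dvd hγ).mpr
        (Nat.not_dvd_of_pos_of_lt hd0 hdγ))
    have hgcd : n.gcd (d * c) = c := by
      rw [hnc, mul_comm d c, Nat.gcd_mul_left, hco.gcd_eq_one, mul_one]
    rw [hgcd, hnc, Nat.mul_div_cancel_left _ hc0]
  set t : Finset (ZMod n) := (Finset.range γ).image (fun i => ((i * c : ℕ) : ZMod n)) with ht_def
  have htcard : t.card = γ := by
    have hinj' : Set.InjOn (fun i : ℕ => ((i * c : ℕ) : ZMod n)) (Finset.range γ) := by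
      intro i hi j hj hij
      exact hinjcast i j (Finset.mem_range.mp (by simpa using hi))
        (Finset.mem_range.mp (by simpa using hj)) hij
    rw [ht_def, Finset.card_image_of_injOn hinj', Finset.card_range]
  have htclique : (cayP2 n α β γ).IsClique t := by
    intro x hx y hy hxy
    simp only [ht_def, Finset.coe_image, Set.mem_image, Finset.coe_range, Set.mem_Iio] at hx hy
    obtain ⟨i, hi, rfl⟩ := hx
    obtain ⟨j, hj, rfl⟩ := hy
    refine ⟨hxy, Or.inr (Or.inr ?_)⟩
    have hij : i ≠ j := fun h => hxy (by rw [h])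
    rcases hij.lt_or_gt with h | h
    · -- i < j : x - y = -(cast ((j-i)*c))
      have hsub : ((j * c : ℕ) : ZMod n) - ((i * c : ℕ) : ZMod n) = (((j - i) * c : ℕ) : ZMod n) := by
        have : (j - i) * c + i * c = j * c := by
          rw [Nat.sub_mul, Nat.sub_add_cancel (Nat.mul_le_mul_right c h.le)]
        rw [← this, Nat.cast_add]; ring
      rw [show ((i * c : ℕ) : ZMod n) - ((j * c : ℕ) : ZMod n) =
        -(((j * c : ℕ) : ZMod n) - ((i * c : ℕ) : ZMod n)) by ring, addOrderOf_neg, hsub]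
      exact horder_dc (j - i) (by omega) (by omega)
    · have hsub : ((i * c : ℕ) : ZMod n) - ((j * c : ℕ) : ZMod n) = (((i - j) * c : ℕ) : ZMod n) := by
        have : (i - j) * c + j * c = i * c := by
          rw [Nat.sub_mul, Nat.sub_add_cancel (Nat.mul_le_mul_right c h.le)]
        rw [← this, Nat.cast_add]; ring
      rw [hsub]
      exact horder_dc (i - j) (by omega) (by omega)
  apply le_antisymm
  · obtain ⟨s, hsclique⟩ := SimpleGraph.exists_isNClique_cliqueNum (G := cayP2 n α β γ)
    rw [← hsclique.card_eq]
    exact upper s hsclique.isClique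
  · have := SimpleGraph.IsClique.card_le_cliqueNum (tc := htclique)
    rwa [htcard] at this
end

section
/- The chromatic number of the graph Cay(G,C) equals γ. -/
/-- If `n = p² * m` with `p` prime, `m > 0`, `gcd(p,m) = 1`, and `d : ZMod n` has
additive order `p²`, then `m ∣ d.val` and `p ∤ d.val`. -/
lemma order_sq_val {n p m : ℕ} (hp : p.Prime) (hn : n = p ^ 2 * m) (hm : 0 < m)
    (hco : Nat.Coprime p m) {d : ZMod n} (hd : addOrderOf d = p ^ 2) :
    m ∣ d.val ∧ ¬ p ∣ d.val := by
  have hn0 : n ≠ 0 := by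
    rw [hn]; exact Nat.mul_ne_zero (pow_ne_zero _ hp.pos.ne') hm.ne'
  haveI : NeZero n := ⟨hn0⟩
  have hcast : ((d.val : ℕ) : ZMod n) = d := by
    rw [ZMod.natCast_val, ZMod.cast_id]
  have horder : n / n.gcd d.val = p ^ 2 := by
    rw [← ZMod.addOrderOf_coe d.val hn0, hcast, hd]
  have hgd : n.gcd d.val ∣ n := Nat.gcd_dvd_left _ _
  have hgm : n.gcd d.val = m := by
    have h1 : n / n.gcd d.val * n.gcd d.val = n := Nat.div_mul_cancel hgd
    rw [horder] at h1
    exact Nat.eq_of_mul_eq_mul_left (pow_pos hp.pos 2) (h1.trans hn)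
  have hmd : m ∣ d.val := by
    have := Nat.gcd_dvd_right n d.val; rwa [hgm] at this
  refine ⟨hmd, fun hpd => ?_⟩
  have hpm : p * m ∣ d.val := hco.mul_dvd_of_dvd_of_dvd hpd hmd
  have hpmn : p * m ∣ n := ⟨p, by rw [hn]; ring⟩
  have hdg : p * m ∣ m := by
    have := Nat.dvd_gcd hpmn hpm; rwa [hgm] at this
  have hle : p * m ≤ m := Nat.le_of_dvd hm hdg
  nlinarith [hp.one_lt]

/-- Conversely, `t * m` has additive order `p²` in `ZMod (p² * m)` for `0 < t < p`. -/
lemma order_mul_sq {n p m t : ℕ} (hp : p.Prime) (hn : n = p ^ 2 * m) (hm : 0 < m)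
    (ht0 : 0 < t) (htp : t < p) :
    addOrderOf ((t * m : ℕ) : ZMod n) = p ^ 2 := by
  subst hn
  have hn0 : p ^ 2 * m ≠ 0 := Nat.mul_ne_zero (pow_ne_zero _ hp.pos.ne') hm.ne'
  rw [ZMod.addOrderOf_coe _ hn0]
  have hcop : Nat.Coprime (p ^ 2) t := by
    have : ¬ p ∣ t := fun h => absurd (Nat.le_of_dvd ht0 h) (not_le.2 htp)
    exact ((hp.coprime_iff_not_dvd).2 this).pow_left 2
  have hg : (p ^ 2 * m).gcd (t * m) = m := by
    rw [Nat.gcd_mul_right, hcop.gcd_eq_one, one_mul]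
  rw [hg, Nat.mul_div_cancel _ hm]

/-- Distinct elements of `ZMod p` with `p ≤ q` have distinct casts of values in
`ZMod q`. -/
lemma val_cast_ne {p q : ℕ} [NeZero p] [NeZero q] (hpq : p ≤ q) {a b : ZMod p}
    (hab : a ≠ b) : ((a.val : ZMod q)) ≠ ((b.val : ZMod q)) := by
  intro h
  apply hab
  apply ZMod.val_injective
  have ha : a.val < q := lt_of_lt_of_le (ZMod.val_lt a) hpq
  have hb : b.val < q := lt_of_lt_of_le (ZMod.val_lt b) hpq
  have := congrArg ZMod.val h
  rwa [ZMod.val_cast_of_lt ha, ZMod.val_cast_of_lt hb] at this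

lemma castHom_eq_iff {n q : ℕ} [NeZero n] (hq : q ∣ n) (v w : ZMod n) :
    ZMod.castHom hq (ZMod q) v = ZMod.castHom hq (ZMod q) w ↔ q ∣ (v - w).val := by
  rw [← sub_eq_zero, ← map_sub]
  conv_lhs => rw [show v - w = (((v - w).val : ℕ) : ZMod n) from by
    rw [ZMod.natCast_val, ZMod.cast_id]]
  rw [map_natCast, ZMod.natCast_eq_zero_iff]

theorem stmt_10 (α β γ : ℕ) (hα : α.Prime) (hβ : β.Prime) (hγ : γ.Prime)
    (hαβ : α < β) (hβγ : β < γ) :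
    (cayP2 (α ^ 2 * β ^ 2 * γ ^ 2) α β γ).chromaticNumber = (γ : ℕ∞) := by
  set n := α ^ 2 * β ^ 2 * γ ^ 2 with hn
  haveI : NeZero α := ⟨hα.pos.ne'⟩
  haveI : NeZero β := ⟨hβ.pos.ne'⟩
  haveI : NeZero γ := ⟨hγ.pos.ne'⟩
  have hn0 : n ≠ 0 := by
    rw [hn]
    exact Nat.mul_ne_zero (Nat.mul_ne_zero (pow_ne_zero _ hα.pos.ne')
      (pow_ne_zero _ hβ.pos.ne')) (pow_ne_zero _ hγ.pos.ne')
  haveI : NeZero n := ⟨hn0⟩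
  have cαβ : Nat.Coprime α β := (Nat.coprime_primes hα hβ).2 hαβ.ne
  have cαγ : Nat.Coprime α γ := (Nat.coprime_primes hα hγ).2 (hαβ.trans hβγ).ne
  have cβγ : Nat.Coprime β γ := (Nat.coprime_primes hβ hγ).2 hβγ.ne
  have hnα : n = α ^ 2 * (β ^ 2 * γ ^ 2) := by rw [hn]; ring
  have hnβ : n = β ^ 2 * (α ^ 2 * γ ^ 2) := by rw [hn]; ring
  have hnγ : n = γ ^ 2 * (α ^ 2 * β ^ 2) := by rw [hn]; ring
  have hmα : 0 < β ^ 2 * γ ^ 2 := Nat.mul_pos (pow_pos hβ.pos 2) (pow_pos hγ.pos 2)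
  have hmβ : 0 < α ^ 2 * γ ^ 2 := Nat.mul_pos (pow_pos hα.pos 2) (pow_pos hγ.pos 2)
  have hmγ : 0 < α ^ 2 * β ^ 2 := Nat.mul_pos (pow_pos hα.pos 2) (pow_pos hβ.pos 2)
  have coα : Nat.Coprime α (β ^ 2 * γ ^ 2) :=
    (cαβ.pow_right 2).mul_right (cαγ.pow_right 2)
  have coβ : Nat.Coprime β (α ^ 2 * γ ^ 2) :=
    (cαβ.symm.pow_right 2).mul_right (cβγ.pow_right 2)
  have coγ : Nat.Coprime γ (α ^ 2 * β ^ 2) :=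
    (cαγ.symm.pow_right 2).mul_right (cβγ.symm.pow_right 2)
  have hdα : α ∣ n := ⟨α * β ^ 2 * γ ^ 2, by rw [hn]; ring⟩
  have hdβ : β ∣ n := ⟨α ^ 2 * β * γ ^ 2, by rw [hn]; ring⟩
  have hdγ : γ ∣ n := ⟨α ^ 2 * β ^ 2 * γ, by rw [hn]; ring⟩
  -- the coloring with γ colors
  set f : ZMod n → ZMod γ := fun x =>
    ((ZMod.castHom hdα (ZMod α) x).val : ZMod γ) +
    ((ZMod.castHom hdβ (ZMod β) x).val : ZMod γ) +
    ((ZMod.castHom hdγ (ZMod γ) x).val : ZMod γ) with hf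
  have hvalid : ∀ {v w : ZMod n}, (cayP2 n α β γ).Adj v w → f v ≠ f w := by
    intro v w hadj
    obtain ⟨hne, hord⟩ := hadj
    rcases hord with h | h | h
    · -- order α²: differ in α-component, agree mod β and mod γ
      obtain ⟨hdvd, hndvd⟩ := order_sq_val hα hnα hmα coα h
      have hβd : β ∣ (v - w).val := dvd_trans ⟨β * γ ^ 2, by ring⟩ hdvd
      have hγd : γ ∣ (v - w).val := dvd_trans ⟨β ^ 2 * γ, by ring⟩ hdvd
      have eβ : ZMod.castHom hdβ (ZMod β) v = ZMod.castHom hdβ (ZMod β) w :=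
        (castHom_eq_iff hdβ v w).2 hβd
      have eγ : ZMod.castHom hdγ (ZMod γ) v = ZMod.castHom hdγ (ZMod γ) w :=
        (castHom_eq_iff hdγ v w).2 hγd
      have nα : ZMod.castHom hdα (ZMod α) v ≠ ZMod.castHom hdα (ZMod α) w :=
        fun hc => hndvd ((castHom_eq_iff hdα v w).1 hc)
      have hA : ((ZMod.castHom hdα (ZMod α) v).val : ZMod γ) ≠
          ((ZMod.castHom hdα (ZMod α) w).val : ZMod γ) :=
        val_cast_ne (hαβ.trans hβγ).le nα
      simp only [hf]
      rw [eβ, eγ]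
      intro hc
      exact hA (by
        have := add_right_cancel (add_right_cancel hc)
        exact this)
    · -- order β²
      obtain ⟨hdvd, hndvd⟩ := order_sq_val hβ hnβ hmβ coβ h
      have hαd : α ∣ (v - w).val := dvd_trans ⟨α * γ ^ 2, by ring⟩ hdvd
      have hγd : γ ∣ (v - w).val := dvd_trans ⟨α ^ 2 * γ, by ring⟩ hdvd
      have eα : ZMod.castHom hdα (ZMod α) v = ZMod.castHom hdα (ZMod α) w :=
        (castHom_eq_iff hdα v w).2 hαd
      have eγ : ZMod.castHom hdγ (ZMod γ) v = ZMod.castHom hdγ (ZMod γ) w :=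
        (castHom_eq_iff hdγ v w).2 hγd
      have nβ : ZMod.castHom hdβ (ZMod β) v ≠ ZMod.castHom hdβ (ZMod β) w :=
        fun hc => hndvd ((castHom_eq_iff hdβ v w).1 hc)
      have hB : ((ZMod.castHom hdβ (ZMod β) v).val : ZMod γ) ≠
          ((ZMod.castHom hdβ (ZMod β) w).val : ZMod γ) :=
        val_cast_ne hβγ.le nβ
      simp only [hf]
      rw [eα, eγ]
      intro hc
      exact hB (add_left_cancel (add_right_cancel hc))
    · -- order γ²
      obtain ⟨hdvd, hndvd⟩ := order_sq_val hγ hnγ hmγ coγ h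
      have hαd : α ∣ (v - w).val := dvd_trans ⟨α * β ^ 2, by ring⟩ hdvd
      have hβd : β ∣ (v - w).val := dvd_trans ⟨α ^ 2 * β, by ring⟩ hdvd
      have eα : ZMod.castHom hdα (ZMod α) v = ZMod.castHom hdα (ZMod α) w :=
        (castHom_eq_iff hdα v w).2 hαd
      have eβ : ZMod.castHom hdβ (ZMod β) v = ZMod.castHom hdβ (ZMod β) w :=
        (castHom_eq_iff hdβ v w).2 hβd
      have nγ : ZMod.castHom hdγ (ZMod γ) v ≠ ZMod.castHom hdγ (ZMod γ) w :=
        fun hc => hndvd ((castHom_eq_iff hdγ v w).1 hc)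
      have hC : ((ZMod.castHom hdγ (ZMod γ) v).val : ZMod γ) ≠
          ((ZMod.castHom hdγ (ZMod γ) w).val : ZMod γ) :=
        val_cast_ne le_rfl nγ
      simp only [hf]
      rw [eα, eβ]
      intro hc
      exact hC (add_left_cancel hc)
  have hcolor : (cayP2 n α β γ).Colorable γ := by
    have C : (cayP2 n α β γ).Coloring (ZMod γ) := SimpleGraph.Coloring.mk f hvalid
    have := C.colorable
    rwa [ZMod.card] at this
  -- lower bound: clique of size γ via multiples of α²β²
  set g : Fin γ → ZMod n := fun k => ((k.val * (α ^ 2 * β ^ 2) : ℕ) : ZMod n) with hg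
  have hadjg : ∀ k j : Fin γ, j.val < k.val → (cayP2 n α β γ).Adj (g k) (g j) := by
    intro k j hlt
    have hsub : g k - g j = (((k.val - j.val) * (α ^ 2 * β ^ 2) : ℕ) : ZMod n) := by
      simp only [hg]
      push_cast [Nat.cast_sub hlt.le]
      ring
    have hordd : addOrderOf (g k - g j) = γ ^ 2 := by
      rw [hsub]
      exact order_mul_sq hγ hnγ hmγ (Nat.sub_pos_of_lt hlt)
        (lt_of_le_of_lt (Nat.sub_le _ _) k.isLt)
    have hne : g k ≠ g j := by
      intro hc
      rw [hc, sub_self, addOrderOf_zero] at hordd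
      have := hγ.one_lt
      nlinarith
    exact ⟨hne, Or.inr (Or.inr hordd)⟩
  have hemb : (⊤ : SimpleGraph (Fin γ)) ↪g (cayP2 n α β γ) := by
    refine ⟨⟨g, ?_⟩, ?_⟩
    · intro a b hab
      by_contra hne
      rcases lt_or_gt_of_ne (fun h : a.val = b.val => hne (Fin.ext h)) with h | h
      · exact ((hadjg b a h).1) hab.symm
      · exact ((hadjg a b h).1) hab
    · intro a b
      simp only [SimpleGraph.top_adj]
      constructor
      · intro h hab
        exact h.1 (by rw [hab])
      · intro hab
        rcases lt_or_gt_of_ne (fun h : a.val = b.val => hab (Fin.ext h)) with h | h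
        · exact ((cayP2 n α β γ).adj_symm (hadjg b a h))
        · exact hadjg a b h
  have hlow : (γ : ℕ∞) ≤ (cayP2 n α β γ).chromaticNumber := by
    have := SimpleGraph.chromaticNumber_mono_of_hom hemb.toHom
    rwa [SimpleGraph.chromaticNumber_top, Fintype.card_fin] at this
  exact le_antisymm hcolor.chromaticNumber_le hlow
end

section
/- For every triple (i, j, k) ∈ ZMod α × ZMod β × ZMod γ, the set C(i,j,k) is an independent set of Cay(G,C) and has cardinality α·β·γ. -/
/-- The set `C(i,j,k)` of elements of `ZMod (α²β²γ²)` whose reductions modulo `α`, `β`, `γ`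
are `i`, `j`, `k` respectively. -/
def redC (α β γ : ℕ) (i : ZMod α) (j : ZMod β) (k : ZMod γ) :
    Set (ZMod (α ^ 2 * β ^ 2 * γ ^ 2)) :=
  {x | ZMod.castHom (⟨α * β ^ 2 * γ ^ 2, by ring⟩ : α ∣ α ^ 2 * β ^ 2 * γ ^ 2) (ZMod α) x = i ∧
       ZMod.castHom (⟨β * α ^ 2 * γ ^ 2, by ring⟩ : β ∣ α ^ 2 * β ^ 2 * γ ^ 2) (ZMod β) x = j ∧
       ZMod.castHom (⟨γ * α ^ 2 * β ^ 2, by ring⟩ : γ ∣ α ^ 2 * β ^ 2 * γ ^ 2) (ZMod γ) x = k}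

theorem stmt_11 (α β γ : ℕ) (hα : α.Prime) (hβ : β.Prime) (hγ : γ.Prime)
    (hαβ : α < β) (hβγ : β < γ) (i : ZMod α) (j : ZMod β) (k : ZMod γ) :
    (∀ x ∈ redC α β γ i j k, ∀ y ∈ redC α β γ i j k,
        ¬ (cayP2 (α ^ 2 * β ^ 2 * γ ^ 2) α β γ).Adj x y) ∧
      (redC α β γ i j k).ncard = α * β * γ := by
  have hαβ' : α ≠ β := hαβ.ne
  have hαγ' : α ≠ γ := (hαβ.trans hβγ).ne
  have hβγ' : β ≠ γ := hβγ.ne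
  have hα0 := hα.pos
  have hβ0 := hβ.pos
  have hγ0 := hγ.pos
  haveI hnz : NeZero (α ^ 2 * β ^ 2 * γ ^ 2) := ⟨by positivity⟩
  have hdα : α ∣ α ^ 2 * β ^ 2 * γ ^ 2 := ⟨α * β ^ 2 * γ ^ 2, by ring⟩
  have hdβ : β ∣ α ^ 2 * β ^ 2 * γ ^ 2 := ⟨β * α ^ 2 * γ ^ 2, by ring⟩
  have hdγ : γ ∣ α ^ 2 * β ^ 2 * γ ^ 2 := ⟨γ * α ^ 2 * β ^ 2, by ring⟩
  have hco1 : Nat.Coprime α β := (Nat.coprime_primes hα hβ).2 hαβ'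
  have hco2 : Nat.Coprime α γ := (Nat.coprime_primes hα hγ).2 hαγ'
  have hco3 : Nat.Coprime β γ := (Nat.coprime_primes hβ hγ).2 hβγ'
  constructor
  · rintro x hx y hy ⟨hxy, hadj⟩
    obtain ⟨hx1, hx2, hx3⟩ := hx
    obtain ⟨hy1, hy2, hy3⟩ := hy
    set z := x - y with hz
    have hv : ∀ (p : ℕ) (hp : p ∣ α ^ 2 * β ^ 2 * γ ^ 2) (c : ZMod p),
        ZMod.castHom hp (ZMod p) x = c → ZMod.castHom hp (ZMod p) y = c → p ∣ z.val := by
      intro p hp c h1 h2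
      have : ZMod.castHom hp (ZMod p) z = 0 := by
        rw [hz, map_sub, h1, h2, sub_self]
      rwa [ZMod.castHom_apply, ← ZMod.natCast_val, ZMod.natCast_eq_zero_iff] at this
    have h1 : α ∣ z.val := hv α hdα i hx1 hy1
    have h2 : β ∣ z.val := hv β hdβ j hx2 hy2
    have h3 : γ ∣ z.val := hv γ hdγ k hx3 hy3
    have hd : α * β * γ ∣ z.val :=
      (hco2.mul hco3).mul_dvd_of_dvd_of_dvd (hco1.mul_dvd_of_dvd_of_dvd h1 h2) h3
    obtain ⟨m, hm⟩ := hd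
    have hsmul : (α * β * γ) • z = 0 := by
      have hzval : ((z.val : ℕ) : ZMod (α ^ 2 * β ^ 2 * γ ^ 2)) = z := by
        rw [ZMod.natCast_val, ZMod.cast_id]
      rw [← hzval, nsmul_eq_mul, ← Nat.cast_mul, hm,
        show α * β * γ * (α * β * γ * m) = α ^ 2 * β ^ 2 * γ ^ 2 * m by ring,
        Nat.cast_mul, ZMod.natCast_self, zero_mul]
    have hdvd : addOrderOf z ∣ α * β * γ := addOrderOf_dvd_of_nsmul_eq_zero hsmul
    have contra : ∀ p : ℕ, p.Prime → p ≠ β → p ≠ γ → p ∣ β * γ → False := by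
      intro p hp hb hc h
      rcases hp.dvd_mul.1 h with h | h
      · exact hb ((Nat.prime_dvd_prime_iff_eq hp hβ).1 h)
      · exact hc ((Nat.prime_dvd_prime_iff_eq hp hγ).1 h)
    have key : ∀ p q r : ℕ, p.Prime → q.Prime → r.Prime → p ≠ q → p ≠ r →
        p ^ 2 ∣ p * (q * r) → False := by
      intro p q r hp hq hr h1 h2 hdd
      have : p ∣ q * r := (Nat.mul_dvd_mul_iff_left hp.pos).1 (by rwa [← sq])
      rcases hp.dvd_mul.1 this with h' | h'
      · exact h1 ((Nat.prime_dvd_prime_iff_eq hp hq).1 h')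
      · exact h2 ((Nat.prime_dvd_prime_iff_eq hp hr).1 h')
    rcases hadj with h | h | h
    · exact key α β γ hα hβ hγ hαβ' hαγ' (by rw [← h]; rw [show α * (β * γ) = α * β * γ by ring]; exact hdvd)
    · exact key β α γ hβ hα hγ hαβ'.symm hβγ' (by rw [← h]; rw [show β * (α * γ) = α * β * γ by ring]; exact hdvd)
    · exact key γ α β hγ hα hβ hαγ'.symm hβγ'.symm (by rw [← h]; rw [show γ * (α * β) = α * β * γ by ring]; exact hdvd)
  · -- cardinality
    set n := α ^ 2 * β ^ 2 * γ ^ 2 with hn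
    let f1 : ZMod n →+* ZMod α := ZMod.castHom hdα (ZMod α)
    let f2 : ZMod n →+* ZMod β := ZMod.castHom hdβ (ZMod β)
    let f3 : ZMod n →+* ZMod γ := ZMod.castHom hdγ (ZMod γ)
    let Φ : ZMod n →+* ZMod α × ZMod β × ZMod γ := f1.prod (f2.prod f3)
    have hset : redC α β γ i j k = Φ ⁻¹' {(i, j, k)} := by
      ext x
      simp only [redC, Set.mem_setOf_eq, Set.mem_preimage, Set.mem_singleton_iff, Φ,
        RingHom.prod_apply, Prod.mk.injEq, f1, f2, f3]
    -- surjectivity of Φ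
    have hdprod : α * (β * γ) ∣ n := by
      refine ⟨α * β * γ, by rw [hn]; ring⟩
    have hcast_surj : Function.Surjective (ZMod.castHom hdprod (ZMod (α * (β * γ)))) := by
      intro t
      haveI : NeZero (α * (β * γ)) := ⟨by positivity⟩
      refine ⟨(t.val : ZMod n), ?_⟩
      rw [map_natCast, ZMod.natCast_val, ZMod.cast_id]
    let e1 := ZMod.chineseRemainder (hco1.mul_right hco2)
    let e2 := ZMod.chineseRemainder hco3
    let Ψ : ZMod n →+* ZMod α × ZMod β × ZMod γ :=
      ((RingHom.id (ZMod α)).prodMap e2.toRingHom).comp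
        (e1.toRingHom.comp (ZMod.castHom hdprod (ZMod (α * (β * γ)))))
    have hΨsurj : Function.Surjective Ψ := by
      rintro ⟨a, b, c⟩
      obtain ⟨t, ht⟩ := hcast_surj (e1.symm (a, e2.symm (b, c)))
      refine ⟨t, ?_⟩
      simp [Ψ, ht]
    have hΦΨ : Φ = Ψ := RingHom.ext_zmod Φ Ψ
    have hΦsurj : Function.Surjective Φ := hΦΨ ▸ hΨsurj
    -- kernel cardinality
    let ψ : ZMod n →+ ZMod α × ZMod β × ZMod γ := Φ.toAddMonoidHom
    have hψsurj : Function.Surjective ψ := hΦsurj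
    let K := ψ.ker
    have hcardG : Nat.card (ZMod n) = α * β * γ * (α * β * γ) := by
      rw [Nat.card_zmod, hn]; ring
    have hquot : Nat.card (ZMod n ⧸ K) = α * β * γ := by
      rw [Nat.card_congr (QuotientAddGroup.quotientKerEquivOfSurjective ψ hψsurj).toEquiv]
      simp [Nat.card_prod, Nat.card_zmod, mul_assoc]
    have hK : Nat.card K = α * β * γ := by
      have := AddSubgroup.card_eq_card_quotient_mul_card_addSubgroup K
      rw [hcardG, hquot] at this
      have hpos : 0 < α * β * γ := by positivity
      exact (Nat.eq_of_mul_eq_mul_left hpos this.symm)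
    -- fiber = translate of kernel
    obtain ⟨x₀, hx₀⟩ := hΦsurj (i, j, k)
    have hfiber : Φ ⁻¹' {(i, j, k)} = (fun z => x₀ + z) '' (K : Set (ZMod n)) := by
      ext x
      simp only [Set.mem_preimage, Set.mem_singleton_iff, Set.mem_image, SetLike.mem_coe,
        AddMonoidHom.mem_ker]
      constructor
      · intro hx
        refine ⟨x - x₀, ?_, by ring⟩
        show ψ (x - x₀) = 0
        rw [map_sub]
        show Φ x - Φ x₀ = 0
        rw [hx, hx₀, sub_self]
      · rintro ⟨z, hz, rfl⟩
        have : Φ (x₀ + z) = Φ x₀ + ψ z := map_add Φ x₀ z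
        rw [this, hz, add_zero, hx₀]
    rw [hset, hfiber, Set.ncard_image_of_injective _ (add_right_injective x₀)]
    rw [← hK]
    rw [← Nat.card_coe_set_eq]
    rfl
end

section
/- For any two distinct triples (i, j, k) and (i', j', k') in ZMod α × ZMod β × ZMod γ, there exist vertices u ∈ C(i,j,k) and v ∈ C(i',j',k') that are adjacent in Cay(G,C) if and only if the triples (i,j,k) and (i',j',k') agree in exactly two of their three coordinates. -/
/-- Two triples agree in exactly two of their three coordinates. -/
def agreeTwo {α β γ : ℕ} (a b : ZMod α × ZMod β × ZMod γ) : Prop :=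
  (a.1 = b.1 ∧ a.2.1 = b.2.1 ∧ a.2.2 ≠ b.2.2) ∨
  (a.1 = b.1 ∧ a.2.1 ≠ b.2.1 ∧ a.2.2 = b.2.2) ∨
  (a.1 ≠ b.1 ∧ a.2.1 = b.2.1 ∧ a.2.2 = b.2.2)

lemma keyOrd (n p Q m : ℕ) (hp : p.Prime) (hQ0 : 0 < Q) (hcop : Nat.Coprime p Q)
    (hn : n = p ^ 2 * Q) :
    addOrderOf ((m : ZMod n)) = p ^ 2 ↔ Q ∣ m ∧ ¬ p ∣ m := by
  subst hn
  have hp0 := hp.pos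
  have hn0 : p ^ 2 * Q ≠ 0 := by positivity
  rw [ZMod.addOrderOf_coe m hn0]
  constructor
  · intro h
    have hg : (p ^ 2 * Q).gcd m ∣ p ^ 2 * Q := Nat.gcd_dvd_left _ _
    have h2 : (p ^ 2 * Q) / ((p ^ 2 * Q).gcd m) * ((p ^ 2 * Q).gcd m) = p ^ 2 * Q :=
      Nat.div_mul_cancel hg
    rw [h] at h2
    have hgQ : (p ^ 2 * Q).gcd m = Q :=
      Nat.eq_of_mul_eq_mul_left (show 0 < p ^ 2 by positivity) h2
    have hQm : Q ∣ m := hgQ ▸ Nat.gcd_dvd_right _ _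
    refine ⟨hQm, fun hpm => ?_⟩
    have hpQm : p * Q ∣ m := (Nat.Coprime.mul_dvd_of_dvd_of_dvd hcop hpm hQm)
    have hpQn : p * Q ∣ p ^ 2 * Q := ⟨p, by ring⟩
    have hd : p * Q ∣ (p ^ 2 * Q).gcd m := Nat.dvd_gcd hpQn hpQm
    rw [hgQ] at hd
    have := Nat.le_of_dvd hQ0 hd
    nlinarith [hp.two_le]
  · rintro ⟨⟨t, rfl⟩, hpm⟩
    have hpt : ¬ p ∣ t := fun h => hpm (h.mul_left Q)
    have hct : Nat.Coprime (p ^ 2) t := (hp.coprime_iff_not_dvd.mpr hpt).pow_left 2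
    have : (p ^ 2 * Q).gcd (Q * t) = Q := by
      rw [show p ^ 2 * Q = Q * p ^ 2 by ring, Nat.gcd_mul_left, hct, mul_one]
    rw [this, Nat.mul_div_cancel _ hQ0]

lemma castNeZero {p q : ℕ} (hp : p.Prime) (hq : q.Prime) (hne : p ≠ q) :
    (q : ZMod p) ≠ 0 := fun h =>
  absurd ((ZMod.natCast_eq_zero_iff q p).mp h)
    ((Nat.Prime.coprime_iff_not_dvd hp).mp ((Nat.coprime_primes hp hq).mpr hne))

lemma exD (p Q : ℕ) [Fact p.Prime] (hQ : (Q : ZMod p) ≠ 0) (x : ZMod p) :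
    ∃ D : ℕ, (D : ZMod p) = x ∧ Q ∣ D := by
  refine ⟨Q * (x * (Q : ZMod p)⁻¹).val, ?_, dvd_mul_right _ _⟩
  push_cast
  rw [ZMod.natCast_rightInverse _]
  field_simp

lemma exV (α β γ : ℕ) [NeZero α] [NeZero β] [NeZero γ]
    (cαβ : Nat.Coprime α β) (cαγ : Nat.Coprime α γ) (cβγ : Nat.Coprime β γ)
    (i : ZMod α) (j : ZMod β) (k : ZMod γ) :
    ∃ V : ℕ, (V : ZMod α) = i ∧ (V : ZMod β) = j ∧ (V : ZMod γ) = k := by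
  obtain ⟨W, hW1, hW2⟩ := Nat.chineseRemainder cαβ i.val j.val
  obtain ⟨V, hV1, hV2⟩ := Nat.chineseRemainder (Nat.Coprime.mul cαγ cβγ) W k.val
  have hVα : V ≡ i.val [MOD α] := ((hV1.of_dvd (dvd_mul_right α β)).trans hW1)
  have hVβ : V ≡ j.val [MOD β] := ((hV1.of_dvd (dvd_mul_left β α)).trans hW2)
  refine ⟨V, ?_, ?_, ?_⟩
  · rw [(ZMod.natCast_eq_natCast_iff _ _ _).mpr hVα, ZMod.natCast_rightInverse]
  · rw [(ZMod.natCast_eq_natCast_iff _ _ _).mpr hVβ, ZMod.natCast_rightInverse]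
  · rw [(ZMod.natCast_eq_natCast_iff _ _ _).mpr hV2, ZMod.natCast_rightInverse]

theorem stmt_12 (α β γ : ℕ) (hα : α.Prime) (hβ : β.Prime) (hγ : γ.Prime)
    (hαβ : α < β) (hβγ : β < γ)
    (a b : ZMod α × ZMod β × ZMod γ) (hab : a ≠ b) :
    (∃ u ∈ redC α β γ a.1 a.2.1 a.2.2, ∃ v ∈ redC α β γ b.1 b.2.1 b.2.2,
        (cayP2 (α ^ 2 * β ^ 2 * γ ^ 2) α β γ).Adj u v)
      ↔ agreeTwo a b := by
  have hα0 := hα.pos; have hβ0 := hβ.pos; have hγ0 := hγ.pos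
  haveI : NeZero α := ⟨hα0.ne'⟩
  haveI : NeZero β := ⟨hβ0.ne'⟩
  haveI : NeZero γ := ⟨hγ0.ne'⟩
  haveI : NeZero (α ^ 2 * β ^ 2 * γ ^ 2) := ⟨by positivity⟩
  have hαβ' : α ≠ β := hαβ.ne
  have hαγ' : α ≠ γ := (hαβ.trans hβγ).ne
  have hβγ' : β ≠ γ := hβγ.ne
  have cαβ : Nat.Coprime α β := (Nat.coprime_primes hα hβ).mpr hαβ'
  have cαγ : Nat.Coprime α γ := (Nat.coprime_primes hα hγ).mpr hαγ'
  have cβγ : Nat.Coprime β γ := (Nat.coprime_primes hβ hγ).mpr hβγ'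
  have copα : Nat.Coprime α (β ^ 2 * γ ^ 2) :=
    (cαβ.pow_right 2).mul_right (cαγ.pow_right 2)
  have copβ : Nat.Coprime β (α ^ 2 * γ ^ 2) :=
    ((cαβ.symm).pow_right 2).mul_right (cβγ.pow_right 2)
  have copγ : Nat.Coprime γ (α ^ 2 * β ^ 2) :=
    ((cαγ.symm).pow_right 2).mul_right ((cβγ.symm).pow_right 2)
  constructor
  · rintro ⟨u, ⟨hu1, hu2, hu3⟩, v, ⟨hv1, hv2, hv3⟩, hne, hord⟩
    have hm : (((u - v).val : ℕ) : ZMod (α ^ 2 * β ^ 2 * γ ^ 2)) = u - v :=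
      ZMod.natCast_rightInverse _
    set m := (u - v).val with hmdef
    have eα : ((m : ZMod α)) = a.1 - b.1 := by
      rw [← map_natCast (ZMod.castHom (⟨α * β ^ 2 * γ ^ 2, by ring⟩ :
        α ∣ α ^ 2 * β ^ 2 * γ ^ 2) (ZMod α)) m, hm, map_sub, hu1, hv1]
    have eβ : ((m : ZMod β)) = a.2.1 - b.2.1 := by
      rw [← map_natCast (ZMod.castHom (⟨β * α ^ 2 * γ ^ 2, by ring⟩ :
        β ∣ α ^ 2 * β ^ 2 * γ ^ 2) (ZMod β)) m, hm, map_sub, hu2, hv2]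
    have eγ : ((m : ZMod γ)) = a.2.2 - b.2.2 := by
      rw [← map_natCast (ZMod.castHom (⟨γ * α ^ 2 * β ^ 2, by ring⟩ :
        γ ∣ α ^ 2 * β ^ 2 * γ ^ 2) (ZMod γ)) m, hm, map_sub, hu3, hv3]
    rcases hord with h | h | h
    · have hk := (keyOrd (α ^ 2 * β ^ 2 * γ ^ 2) α (β ^ 2 * γ ^ 2) m hα (by positivity)
        copα (by ring)).mp (by rwa [hm])
      right; right
      refine ⟨fun he => hk.2 ((ZMod.natCast_eq_zero_iff m α).mp
        (by rw [eα, he, sub_self])), ?_, ?_⟩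
      · have h0 : (m : ZMod β) = 0 := (ZMod.natCast_eq_zero_iff m β).mpr
          (dvd_trans ⟨β * γ ^ 2, by ring⟩ hk.1)
        rw [eβ] at h0; exact sub_eq_zero.mp h0
      · have h0 : (m : ZMod γ) = 0 := (ZMod.natCast_eq_zero_iff m γ).mpr
          (dvd_trans ⟨β ^ 2 * γ, by ring⟩ hk.1)
        rw [eγ] at h0; exact sub_eq_zero.mp h0
    · have hk := (keyOrd (α ^ 2 * β ^ 2 * γ ^ 2) β (α ^ 2 * γ ^ 2) m hβ (by positivity)
        copβ (by ring)).mp (by rwa [hm])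
      right; left
      refine ⟨?_, fun he => hk.2 ((ZMod.natCast_eq_zero_iff m β).mp
        (by rw [eβ, he, sub_self])), ?_⟩
      · have h0 : (m : ZMod α) = 0 := (ZMod.natCast_eq_zero_iff m α).mpr
          (dvd_trans ⟨α * γ ^ 2, by ring⟩ hk.1)
        rw [eα] at h0; exact sub_eq_zero.mp h0
      · have h0 : (m : ZMod γ) = 0 := (ZMod.natCast_eq_zero_iff m γ).mpr
          (dvd_trans ⟨α ^ 2 * γ, by ring⟩ hk.1)
        rw [eγ] at h0; exact sub_eq_zero.mp h0
    · have hk := (keyOrd (α ^ 2 * β ^ 2 * γ ^ 2) γ (α ^ 2 * β ^ 2) m hγ (by positivity)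
        copγ (by ring)).mp (by rwa [hm])
      left
      refine ⟨?_, ?_, fun he => hk.2 ((ZMod.natCast_eq_zero_iff m γ).mp
        (by rw [eγ, he, sub_self]))⟩
      · have h0 : (m : ZMod α) = 0 := (ZMod.natCast_eq_zero_iff m α).mpr
          (dvd_trans ⟨α * β ^ 2, by ring⟩ hk.1)
        rw [eα] at h0; exact sub_eq_zero.mp h0
      · have h0 : (m : ZMod β) = 0 := (ZMod.natCast_eq_zero_iff m β).mpr
          (dvd_trans ⟨α ^ 2 * β, by ring⟩ hk.1)
        rw [eβ] at h0; exact sub_eq_zero.mp h0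
  · obtain ⟨V, hVα, hVβ, hVγ⟩ := exV α β γ cαβ cαγ cβγ b.1 b.2.1 b.2.2
    rintro (⟨h1, h2, h3⟩ | ⟨h1, h2, h3⟩ | ⟨h1, h2, h3⟩)
    · -- γ coordinate differs
      haveI : Fact γ.Prime := ⟨hγ⟩
      have hQ : ((α ^ 2 * β ^ 2 : ℕ) : ZMod γ) ≠ 0 := by
        push_cast
        exact mul_ne_zero (pow_ne_zero _ (castNeZero hγ hα hαγ'.symm))
          (pow_ne_zero _ (castNeZero hγ hβ hβγ'.symm))
      obtain ⟨D, hDγ, hDQ⟩ := exD γ (α ^ 2 * β ^ 2) hQ (a.2.2 - b.2.2)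
      have hDord : addOrderOf ((D : ℕ) : ZMod (α ^ 2 * β ^ 2 * γ ^ 2)) = γ ^ 2 :=
        (keyOrd _ γ (α ^ 2 * β ^ 2) D hγ (by positivity) copγ (by ring)).mpr
          ⟨hDQ, fun h => sub_ne_zero.mpr h3
            (hDγ ▸ (ZMod.natCast_eq_zero_iff D γ).mpr h)⟩
      have hDα : (D : ZMod α) = 0 := (ZMod.natCast_eq_zero_iff D α).mpr
        (dvd_trans ⟨α * β ^ 2, by ring⟩ hDQ)
      have hDβ : (D : ZMod β) = 0 := (ZMod.natCast_eq_zero_iff D β).mpr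
        (dvd_trans ⟨α ^ 2 * β, by ring⟩ hDQ)
      have hD0 : ((D : ℕ) : ZMod (α ^ 2 * β ^ 2 * γ ^ 2)) ≠ 0 := by
        intro h0
        rw [h0, addOrderOf_zero] at hDord
        nlinarith [hγ.two_le]
      have hsub : ((V : ZMod (α ^ 2 * β ^ 2 * γ ^ 2)) + (D : ZMod (α ^ 2 * β ^ 2 * γ ^ 2))) - (V : ZMod (α ^ 2 * β ^ 2 * γ ^ 2)) = (D : ZMod (α ^ 2 * β ^ 2 * γ ^ 2)) := by ring
      refine ⟨(V : ZMod _) + (D : ZMod _), ⟨?_, ?_, ?_⟩, (V : ZMod _), ⟨?_, ?_, ?_⟩,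
        ?_, Or.inr (Or.inr ?_)⟩
      · rw [map_add, map_natCast, map_natCast, hVα, hDα, h1, add_zero]
      · rw [map_add, map_natCast, map_natCast, hVβ, hDβ, h2, add_zero]
      · rw [map_add, map_natCast, map_natCast, hVγ, hDγ]; ring
      · rw [map_natCast]; exact hVα
      · rw [map_natCast]; exact hVβ
      · rw [map_natCast]; exact hVγ
      · exact sub_ne_zero.mp (by rw [hsub]; exact hD0)
      · rw [hsub]; exact hDord
    · -- β coordinate differs
      haveI : Fact β.Prime := ⟨hβ⟩
      have hQ : ((α ^ 2 * γ ^ 2 : ℕ) : ZMod β) ≠ 0 := by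
        push_cast
        exact mul_ne_zero (pow_ne_zero _ (castNeZero hβ hα hαβ'.symm))
          (pow_ne_zero _ (castNeZero hβ hγ hβγ'))
      obtain ⟨D, hDβ, hDQ⟩ := exD β (α ^ 2 * γ ^ 2) hQ (a.2.1 - b.2.1)
      have hDord : addOrderOf ((D : ℕ) : ZMod (α ^ 2 * β ^ 2 * γ ^ 2)) = β ^ 2 :=
        (keyOrd _ β (α ^ 2 * γ ^ 2) D hβ (by positivity) copβ (by ring)).mpr
          ⟨hDQ, fun h => sub_ne_zero.mpr h2
            (hDβ ▸ (ZMod.natCast_eq_zero_iff D β).mpr h)⟩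
      have hDα : (D : ZMod α) = 0 := (ZMod.natCast_eq_zero_iff D α).mpr
        (dvd_trans ⟨α * γ ^ 2, by ring⟩ hDQ)
      have hDγ : (D : ZMod γ) = 0 := (ZMod.natCast_eq_zero_iff D γ).mpr
        (dvd_trans ⟨α ^ 2 * γ, by ring⟩ hDQ)
      have hD0 : ((D : ℕ) : ZMod (α ^ 2 * β ^ 2 * γ ^ 2)) ≠ 0 := by
        intro h0
        rw [h0, addOrderOf_zero] at hDord
        nlinarith [hβ.two_le]
      have hsub : ((V : ZMod (α ^ 2 * β ^ 2 * γ ^ 2)) + (D : ZMod (α ^ 2 * β ^ 2 * γ ^ 2))) - (V : ZMod (α ^ 2 * β ^ 2 * γ ^ 2)) = (D : ZMod (α ^ 2 * β ^ 2 * γ ^ 2)) := by ring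
      refine ⟨(V : ZMod _) + (D : ZMod _), ⟨?_, ?_, ?_⟩, (V : ZMod _), ⟨?_, ?_, ?_⟩,
        ?_, Or.inr (Or.inl ?_)⟩
      · rw [map_add, map_natCast, map_natCast, hVα, hDα, h1, add_zero]
      · rw [map_add, map_natCast, map_natCast, hVβ, hDβ]; ring
      · rw [map_add, map_natCast, map_natCast, hVγ, hDγ, h3, add_zero]
      · rw [map_natCast]; exact hVα
      · rw [map_natCast]; exact hVβ
      · rw [map_natCast]; exact hVγ
      · exact sub_ne_zero.mp (by rw [hsub]; exact hD0)
      · rw [hsub]; exact hDord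
    · -- α coordinate differs
      haveI : Fact α.Prime := ⟨hα⟩
      have hQ : ((β ^ 2 * γ ^ 2 : ℕ) : ZMod α) ≠ 0 := by
        push_cast
        exact mul_ne_zero (pow_ne_zero _ (castNeZero hα hβ hαβ'))
          (pow_ne_zero _ (castNeZero hα hγ hαγ'))
      obtain ⟨D, hDα, hDQ⟩ := exD α (β ^ 2 * γ ^ 2) hQ (a.1 - b.1)
      have hDord : addOrderOf ((D : ℕ) : ZMod (α ^ 2 * β ^ 2 * γ ^ 2)) = α ^ 2 :=
        (keyOrd _ α (β ^ 2 * γ ^ 2) D hα (by positivity) copα (by ring)).mpr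
          ⟨hDQ, fun h => sub_ne_zero.mpr h1
            (hDα ▸ (ZMod.natCast_eq_zero_iff D α).mpr h)⟩
      have hDβ : (D : ZMod β) = 0 := (ZMod.natCast_eq_zero_iff D β).mpr
        (dvd_trans ⟨β * γ ^ 2, by ring⟩ hDQ)
      have hDγ : (D : ZMod γ) = 0 := (ZMod.natCast_eq_zero_iff D γ).mpr
        (dvd_trans ⟨β ^ 2 * γ, by ring⟩ hDQ)
      have hD0 : ((D : ℕ) : ZMod (α ^ 2 * β ^ 2 * γ ^ 2)) ≠ 0 := by
        intro h0
        rw [h0, addOrderOf_zero] at hDord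
        nlinarith [hα.two_le]
      have hsub : ((V : ZMod (α ^ 2 * β ^ 2 * γ ^ 2)) + (D : ZMod (α ^ 2 * β ^ 2 * γ ^ 2))) - (V : ZMod (α ^ 2 * β ^ 2 * γ ^ 2)) = (D : ZMod (α ^ 2 * β ^ 2 * γ ^ 2)) := by ring
      refine ⟨(V : ZMod _) + (D : ZMod _), ⟨?_, ?_, ?_⟩, (V : ZMod _), ⟨?_, ?_, ?_⟩,
        ?_, Or.inl ?_⟩
      · rw [map_add, map_natCast, map_natCast, hVα, hDα]; ring
      · rw [map_add, map_natCast, map_natCast, hVβ, hDβ, h2, add_zero]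
      · rw [map_add, map_natCast, map_natCast, hVγ, hDγ, h3, add_zero]
      · rw [map_natCast]; exact hVα
      · rw [map_natCast]; exact hVβ
      · rw [map_natCast]; exact hVγ
      · exact sub_ne_zero.mp (by rw [hsub]; exact hD0)
      · rw [hsub]; exact hDord
end

section
/- Let I be a finite subset of ZMod α × ZMod β × ZMod γ such that no two distinct elements of I agree in exactly two coordinates. Then the cardinality of I is at most α·β. -/
theorem injOn_fst_fst_snd_of_pairwise_not_agreeTwo {α β γ : ℕ}
    {s : Set (ZMod α × ZMod β × ZMod γ)} (hs : s.Pairwise fun a b => ¬ agreeTwo a b) :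
    Set.InjOn (fun a : ZMod α × ZMod β × ZMod γ => (a.1, a.2.1)) s := by
  intro a ha b hb hab
  obtain ⟨h₁, h₂⟩ := Prod.mk.inj hab
  by_contra hne
  have h₃ : a.2.2 ≠ b.2.2 := fun h₃ => hne (Prod.ext h₁ (Prod.ext h₂ h₃))
  exact hs ha hb hne (Or.inl ⟨h₁, h₂, h₃⟩)

theorem stmt_13_general (α β γ : ℕ) (hα : α.Prime) (hβ : β.Prime)
    (I : Finset (ZMod α × ZMod β × ZMod γ))
    (hI : ∀ a ∈ I, ∀ b ∈ I, a ≠ b → ¬ agreeTwo a b) :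
    I.card ≤ α * β := by
  have : NeZero α := ⟨hα.ne_zero⟩
  have : NeZero β := ⟨hβ.ne_zero⟩
  calc I.card ≤ (Finset.univ : Finset (ZMod α × ZMod β)).card :=
        Finset.card_le_card_of_injOn _ (fun _ _ => Finset.mem_univ _)
          (injOn_fst_fst_snd_of_pairwise_not_agreeTwo hI)
    _ = α * β := by simp [ZMod.card]

theorem stmt_13 (α β γ : ℕ) (hα : α.Prime) (hβ : β.Prime) (hγ : γ.Prime)
    (hαβ : α < β) (hβγ : β < γ)
    (I : Finset (ZMod α × ZMod β × ZMod γ))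
    (hI : ∀ a ∈ I, ∀ b ∈ I, a ≠ b → ¬ agreeTwo a b) :
    I.card ≤ α * β :=
  stmt_13_general α β γ hα hβ I hI
end

section
/- Every independent set S of the graph Cay(G,C) satisfies |S| ≤ α²·β²·γ. -/
/-- Key arithmetic lemma: if `d : ZMod n` (with `n = α²β²γ²`) has `α²β² ∣ d.val` and
`addOrderOf d ≠ γ²`, then `α²β²γ ∣ d.val`. -/
lemma key_dvd {α β γ : ℕ} (hα : 0 < α) (hβ : 0 < β) (hγ : γ.Prime)
    (d : ZMod (α ^ 2 * β ^ 2 * γ ^ 2)) (hord : addOrderOf d ≠ γ ^ 2)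
    (hdvd : α ^ 2 * β ^ 2 ∣ d.val) : α ^ 2 * β ^ 2 * γ ∣ d.val := by
  obtain ⟨v, hv⟩ := hdvd
  have hm1 : 0 < α ^ 2 * β ^ 2 := by positivity
  suffices h : γ ∣ v by
    obtain ⟨w, hw⟩ := h
    exact ⟨w, by rw [hv, hw]; ring⟩
  by_contra h
  have hcop : Nat.Coprime (γ ^ 2) v := (hγ.coprime_iff_not_dvd.mpr h).pow_left 2
  have hγ0 := hγ.pos
  have hne : (α ^ 2 * β ^ 2 * γ ^ 2 : ℕ) ≠ 0 := by positivity
  haveI : NeZero (α ^ 2 * β ^ 2 * γ ^ 2) := ⟨hne⟩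
  have h1 : addOrderOf d = (α ^ 2 * β ^ 2 * γ ^ 2) / (α ^ 2 * β ^ 2 * γ ^ 2).gcd d.val := by
    conv_lhs => rw [← ZMod.natCast_zmod_val d]
    exact ZMod.addOrderOf_coe d.val hne
  rw [hv, Nat.gcd_mul_left, hcop, mul_one, Nat.mul_div_cancel_left _ hm1] at h1
  exact hord h1

theorem stmt_14 (α β γ : ℕ) (hα : α.Prime) (hβ : β.Prime) (hγ : γ.Prime)
    (hαβ : α < β) (hβγ : β < γ) (S : Set (ZMod (α ^ 2 * β ^ 2 * γ ^ 2)))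
    (hS : ∀ x ∈ S, ∀ y ∈ S, ¬ (cayP2 (α ^ 2 * β ^ 2 * γ ^ 2) α β γ).Adj x y) :
    S.ncard ≤ α ^ 2 * β ^ 2 * γ := by
  classical
  have hα0 := hα.pos; have hβ0 := hβ.pos; have hγ0 := hγ.pos
  haveI : NeZero (α ^ 2 * β ^ 2 * γ ^ 2) := ⟨by positivity⟩
  haveI : NeZero (α ^ 2 * β ^ 2) := ⟨by positivity⟩
  have hdvd1 : (α ^ 2 * β ^ 2 : ℕ) ∣ α ^ 2 * β ^ 2 * γ ^ 2 := ⟨γ ^ 2, rfl⟩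
  set f : ZMod (α ^ 2 * β ^ 2 * γ ^ 2) → ZMod (α ^ 2 * β ^ 2) :=
    ⇑(ZMod.castHom hdvd1 (ZMod (α ^ 2 * β ^ 2))) with hf
  have hfin := S.toFinite
  rw [Set.ncard_eq_toFinset_card S hfin]
  set s := hfin.toFinset with hs
  have hfiber : ∀ b : ZMod (α ^ 2 * β ^ 2),
      (s.filter (fun a => f a = b)).card ≤ γ := by
    intro b
    rcases (s.filter (fun a => f a = b)).eq_empty_or_nonempty with he | ⟨x₀, hx₀⟩
    · simp [he]
    · have hsub : s.filter (fun a => f a = b) ⊆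
          Finset.image (fun w : Fin γ =>
            x₀ + ((α ^ 2 * β ^ 2 * γ * (w : ℕ) : ℕ) : ZMod (α ^ 2 * β ^ 2 * γ ^ 2)))
            Finset.univ := by
        intro x hx
        simp only [Finset.mem_filter] at hx hx₀
        have hxS : x ∈ S := hfin.mem_toFinset.mp hx.1
        have hx₀S : x₀ ∈ S := hfin.mem_toFinset.mp hx₀.1
        have hd1 : f (x - x₀) = 0 := by
          show ZMod.castHom hdvd1 (ZMod (α ^ 2 * β ^ 2)) (x - x₀) = 0
          rw [map_sub]
          show f x - f x₀ = 0
          rw [hx.2, hx₀.2, sub_self]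
        have hd0 : ((x - x₀).val : ZMod (α ^ 2 * β ^ 2)) = 0 := by
          rw [ZMod.natCast_val, ← ZMod.castHom_apply (h := hdvd1)]
          exact hd1
        have hdvd : (α ^ 2 * β ^ 2 : ℕ) ∣ (x - x₀).val :=
          (ZMod.natCast_eq_zero_iff _ _).mp hd0
        by_cases hxx : x = x₀
        · refine Finset.mem_image.mpr ⟨⟨0, hγ0⟩, Finset.mem_univ _, ?_⟩
          simp [hxx]
        · have hadj := hS x hxS x₀ hx₀S
          have hord : addOrderOf (x - x₀) ≠ γ ^ 2 :=
            fun hc => hadj ⟨hxx, Or.inr (Or.inr hc)⟩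
          obtain ⟨w, hw⟩ := key_dvd hα0 hβ0 hγ (x - x₀) hord hdvd
          have hwlt : w < γ := by
            have h1 : (x - x₀).val < α ^ 2 * β ^ 2 * γ * γ := by
              have := ZMod.val_lt (x - x₀)
              calc (x - x₀).val < α ^ 2 * β ^ 2 * γ ^ 2 := this
                _ = α ^ 2 * β ^ 2 * γ * γ := by ring
            rw [hw] at h1
            exact Nat.lt_of_mul_lt_mul_left h1
          refine Finset.mem_image.mpr ⟨⟨w, hwlt⟩, Finset.mem_univ _, ?_⟩
          have heq : ((α ^ 2 * β ^ 2 * γ * w : ℕ) : ZMod (α ^ 2 * β ^ 2 * γ ^ 2))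
              = x - x₀ := by rw [← hw, ZMod.natCast_zmod_val]
          simp only [heq]
          ring
      calc (s.filter (fun a => f a = b)).card
          ≤ (Finset.image (fun w : Fin γ =>
              x₀ + ((α ^ 2 * β ^ 2 * γ * (w : ℕ) : ℕ) : ZMod (α ^ 2 * β ^ 2 * γ ^ 2)))
              Finset.univ).card := Finset.card_le_card hsub
        _ ≤ (Finset.univ : Finset (Fin γ)).card := Finset.card_image_le
        _ = γ := by simp
  have hmain := Finset.card_le_mul_card_image_of_maps_to
    (f := f) (s := s) (t := Finset.univ) (fun a _ => Finset.mem_univ _) γ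
    (fun b _ => hfiber b)
  rw [Finset.card_univ, ZMod.card] at hmain
  calc s.card ≤ γ * (α ^ 2 * β ^ 2) := hmain
    _ = α ^ 2 * β ^ 2 * γ := by ring
end

section
/- The set L = {(i, j, k) ∈ ZMod α × ZMod β × ZMod γ : k equals the reduction modulo γ of (i.val + j.val), where i.val and j.val denote the natural-number representatives of i and j} has cardinality α·β, and no two distinct elements of L agree in exactly two coordinates. -/
open Function

theorem Set.ncard_setOf_snd_snd_eq {A B C : Type*} (g : A → B → C) :
    {t : A × B × C | t.2.2 = g t.1 t.2.1}.ncard = Nat.card A * Nat.card B := by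
  have hgraph : {t : A × B × C | t.2.2 = g t.1 t.2.1} =
      Set.range (fun p : A × B => (p.1, p.2, g p.1 p.2)) := by
    ext ⟨i, j, k⟩
    constructor
    · rintro (rfl : k = g i j)
      exact ⟨(i, j), rfl⟩
    · rintro ⟨p, hp⟩
      cases hp
      rfl
  have hinj : Injective (fun p : A × B => (p.1, p.2, g p.1 p.2)) :=
    fun _ _ h => Prod.ext_iff.2 ⟨congrArg (·.1) h, congrArg (·.2.1) h⟩
  rw [hgraph, Set.ncard_range_of_injective hinj, Nat.card_prod]

theorem not_agreeTwo_of_eq_apply {α β γ : ℕ} {g : ZMod α → ZMod β → ZMod γ}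
    (hg₁ : ∀ j, Injective (g · j)) (hg₂ : ∀ i, Injective (g i))
    {a b : ZMod α × ZMod β × ZMod γ} (ha : a.2.2 = g a.1 a.2.1) (hb : b.2.2 = g b.1 b.2.1) :
    ¬ agreeTwo a b := by
  obtain ⟨i, j, k⟩ := a
  obtain ⟨i', j', k'⟩ := b
  dsimp only at ha hb
  subst ha hb
  rintro (⟨rfl, rfl, hk⟩ | ⟨rfl, hj, hk⟩ | ⟨hi, rfl, hk⟩)
  · exact hk rfl
  · exact hj (hg₂ i hk)
  · exact hi (hg₁ j hk)

theorem ZMod.natCast_val_add_natCast_val_injective {α β γ : ℕ} [NeZero α] [NeZero β]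
    (hαγ : α ≤ γ) (hβγ : β ≤ γ) :
    (∀ j : ZMod β, Injective fun i : ZMod α => ((i.val + j.val : ℕ) : ZMod γ)) ∧
      ∀ i : ZMod α, Injective fun j : ZMod β => ((i.val + j.val : ℕ) : ZMod γ) := by
  simp only [Nat.cast_add, ZMod.natCast_val]
  exact ⟨fun j => (add_left_injective _).comp (ZMod.cast_injective_of_le hαγ),
    fun i => (add_right_injective _).comp (ZMod.cast_injective_of_le hβγ)⟩

theorem stmt_15_general (α β γ : ℕ) (hα : α.Prime)
    (hαβ : α < β) (hβγ : β < γ) :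
    ({t : ZMod α × ZMod β × ZMod γ |
        t.2.2 = ((t.1.val + t.2.1.val : ℕ) : ZMod γ)}).ncard = α * β ∧
      ∀ a ∈ {t : ZMod α × ZMod β × ZMod γ |
          t.2.2 = ((t.1.val + t.2.1.val : ℕ) : ZMod γ)},
        ∀ b ∈ {t : ZMod α × ZMod β × ZMod γ |
          t.2.2 = ((t.1.val + t.2.1.val : ℕ) : ZMod γ)},
        a ≠ b → ¬ agreeTwo a b := by
  have : NeZero α := ⟨hα.ne_zero⟩
  have : NeZero β := NeZero.of_gt hαβ
  obtain ⟨hinj₁, hinj₂⟩ :=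
    ZMod.natCast_val_add_natCast_val_injective (γ := γ) (hαβ.trans hβγ).le hβγ.le
  refine ⟨?_, fun a ha b hb _ => not_agreeTwo_of_eq_apply hinj₁ hinj₂ ha hb⟩
  rw [Set.ncard_setOf_snd_snd_eq fun (i : ZMod α) (j : ZMod β) => ((i.val + j.val : ℕ) : ZMod γ),
    Nat.card_zmod, Nat.card_zmod]

theorem stmt_15 (α β γ : ℕ) (hα : α.Prime) (hβ : β.Prime) (hγ : γ.Prime)
    (hαβ : α < β) (hβγ : β < γ) :
    ({t : ZMod α × ZMod β × ZMod γ |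
        t.2.2 = ((t.1.val + t.2.1.val : ℕ) : ZMod γ)}).ncard = α * β ∧
      ∀ a ∈ {t : ZMod α × ZMod β × ZMod γ |
          t.2.2 = ((t.1.val + t.2.1.val : ℕ) : ZMod γ)},
        ∀ b ∈ {t : ZMod α × ZMod β × ZMod γ |
          t.2.2 = ((t.1.val + t.2.1.val : ℕ) : ZMod γ)},
        a ≠ b → ¬ agreeTwo a b :=
  stmt_15_general α β γ hα hαβ hβγ
end

section
/- The independence number of the graph Cay(G,C) equals α²·β²·γ; that is, the maximum cardinality of a set of pairwise non-adjacent vertices in Cay(G,C) is α²·β²·γ. -/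
private lemma gcd_mul_order {n : ℕ} (hn : n ≠ 0) (z : ZMod n) {k : ℕ}
    (h : addOrderOf z = k) : n.gcd z.val * k = n := by
  haveI : NeZero n := ⟨hn⟩
  have hz : ((z.val : ℕ) : ZMod n) = z := by rw [ZMod.natCast_val, ZMod.cast_id]
  have h1 := ZMod.addOrderOf_coe z.val hn
  rw [hz, h] at h1
  have h2 : n.gcd z.val * (n / n.gcd z.val) = n :=
    Nat.mul_div_cancel' (Nat.gcd_dvd_left n z.val)
  rw [← h1] at h2
  exact h2

private lemma upper_bound (α β γ : ℕ) (hα : α.Prime) (hβ : β.Prime) (hγ : γ.Prime)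
    (hαβ : α < β) (hβγ : β < γ)
    {n : ℕ} (hn : n = α ^ 2 * β ^ 2 * γ ^ 2)
    (S : Set (ZMod n))
    (hS : ∀ x ∈ S, ∀ y ∈ S, ¬ (cayP2 n α β γ).Adj x y) :
    S.ncard ≤ α ^ 2 * β ^ 2 * γ := by
  have hα0 := hα.pos; have hβ0 := hβ.pos; have hγ0 := hγ.pos
  have hM0 : 0 < α ^ 2 * β ^ 2 := by positivity
  set M := α ^ 2 * β ^ 2 with hM
  have hn0 : n ≠ 0 := by rw [hn]; positivity
  haveI : NeZero n := ⟨hn0⟩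
  have hMγ0 : 0 < M * γ := by positivity
  have hnM : n = M * γ ^ 2 := by rw [hn, hM]
  have key : ∀ x y : ZMod n, y.val < x.val → x.val % M = y.val % M →
      x.val / (M * γ) = y.val / (M * γ) → addOrderOf (x - y) = γ ^ 2 := by
    intro x y hlt h1 h2
    set d := x.val - y.val with hd
    have hd0 : 0 < d := Nat.sub_pos_of_lt hlt
    have hMd : M ∣ d := (Nat.modEq_iff_dvd' hlt.le).mp
      (show Nat.ModEq M y.val x.val from h1.symm)
    have hdlt : d < M * γ := by
      have e1 := Nat.div_add_mod x.val (M * γ)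
      have e2 := Nat.div_add_mod y.val (M * γ)
      rw [h2] at e1
      have e3 : x.val % (M * γ) < M * γ := Nat.mod_lt _ hMγ0
      set C := M * γ * (y.val / (M * γ)) with hC
      omega
    set t := d / M with ht
    have hdt : M * t = d := Nat.mul_div_cancel' hMd
    have ht0 : t ≠ 0 := by intro h0; rw [h0, mul_zero] at hdt; omega
    have htγ : t < γ := by
      by_contra hle
      push_neg at hle
      have : M * γ ≤ M * t := Nat.mul_le_mul_left _ hle
      omega
    have hcop : Nat.Coprime (γ ^ 2) t :=
      (hγ.coprime_iff_not_dvd.mpr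
        (fun hdvd => absurd (Nat.le_of_dvd (Nat.pos_of_ne_zero ht0) hdvd)
          (not_le.mpr htγ))).pow_left 2
    have hsub : x - y = ((d : ℕ) : ZMod n) := by
      have hx : ((x.val : ℕ) : ZMod n) = x := by rw [ZMod.natCast_val, ZMod.cast_id]
      have hy' : ((y.val : ℕ) : ZMod n) = y := by rw [ZMod.natCast_val, ZMod.cast_id]
      rw [hd, Nat.cast_sub hlt.le, hx, hy']
    rw [hsub, ZMod.addOrderOf_coe _ hn0]
    have hg : n.gcd d = M := by
      rw [hnM, ← hdt, Nat.gcd_mul_left, Nat.Coprime.gcd_eq_one hcop, mul_one]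
    rw [hg, hnM, Nat.mul_div_cancel_left _ hM0]
  -- injection into Fin M × Fin γ
  have hlt1 : ∀ x : ZMod n, x.val % M < M := fun x => Nat.mod_lt _ hM0
  have hlt2 : ∀ x : ZMod n, x.val / (M * γ) < γ := by
    intro x
    rw [Nat.div_lt_iff_lt_mul hMγ0]
    calc x.val < n := ZMod.val_lt x
    _ = γ * (M * γ) := by rw [hnM]; ring
  set f : ZMod n → Fin M × Fin γ :=
    fun x => (⟨x.val % M, hlt1 x⟩, ⟨x.val / (M * γ), hlt2 x⟩) with hf
  have hinj : Set.InjOn f S := by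
    intro a ha b hb hfe
    simp only [hf, Prod.mk.injEq, Fin.mk.injEq] at hfe
    obtain ⟨e1, e2⟩ := hfe
    by_contra hne
    rcases Nat.lt_trichotomy a.val b.val with h | h | h
    · exact hS b hb a ha ⟨fun hh => hne hh.symm,
        Or.inr (Or.inr (key b a h e1.symm e2.symm))⟩
    · exact hne (ZMod.val_injective _ h)
    · exact hS a ha b hb ⟨hne, Or.inr (Or.inr (key a b h e1 e2))⟩
  have := Set.ncard_le_ncard_of_injOn f (fun a _ => Set.mem_univ (f a)) hinj
    Set.finite_univ
  rw [Set.ncard_univ] at this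
  simpa [Nat.card_eq_fintype_card, hM] using this

private lemma lower_bound (α β γ : ℕ) (hα : α.Prime) (hβ : β.Prime) (hγ : γ.Prime)
    (hαβ : α < β) (hβγ : β < γ) {n : ℕ} (hn : n = α ^ 2 * β ^ 2 * γ ^ 2) :
    ∃ S : Set (ZMod n),
      (∀ x ∈ S, ∀ y ∈ S, ¬ (cayP2 n α β γ).Adj x y) ∧ S.ncard = α ^ 2 * β ^ 2 * γ := by
  classical
  have hα0 := hα.pos; have hβ0 := hβ.pos; have hγ0 := hγ.pos
  have hαγ : α < γ := hαβ.trans hβγ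
  have hM0 : 0 < α ^ 2 * β ^ 2 := by positivity
  set M := α ^ 2 * β ^ 2 with hM
  have hn0 : n ≠ 0 := by rw [hn]; positivity
  haveI : NeZero n := ⟨hn0⟩
  haveI : NeZero γ := ⟨hγ0.ne'⟩
  haveI : Fact γ.Prime := ⟨hγ⟩
  have hnM : n = M * γ ^ 2 := by rw [hn, hM]
  -- basic divisibilities
  have hαM : α ∣ M := dvd_mul_of_dvd_left (dvd_pow_self α two_ne_zero) _
  have hβM : β ∣ M := dvd_mul_of_dvd_right (dvd_pow_self β two_ne_zero) _
  have hMn : M ∣ n := ⟨γ ^ 2, hnM⟩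
  have hαn : α ∣ n := hαM.trans hMn
  have hβn : β ∣ n := hβM.trans hMn
  have hγn : γ ∣ n := by rw [hnM]; exact dvd_mul_of_dvd_right (dvd_pow_self γ two_ne_zero) _
  have hcopγM : Nat.Coprime γ M :=
    (((Nat.coprime_primes hγ hα).mpr hαγ.ne').pow_right 2).mul_right
      (((Nat.coprime_primes hγ hβ).mpr hβγ.ne').pow_right 2)
  -- the defect function and the set S
  set f : ZMod n → ZMod γ :=
    fun x => ((x.val : ℕ) : ZMod γ) - (((x.val % α + x.val % β) : ℕ) : ZMod γ) with hf
  set S : Set (ZMod n) := {x | f x = 0} with hSdef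
  have hmem : ∀ x : ZMod n, x ∈ S ↔ Nat.ModEq γ x.val (x.val % α + x.val % β) := by
    intro x
    rw [hSdef]
    simp only [Set.mem_setOf_eq, hf, sub_eq_zero, ZMod.natCast_eq_natCast_iff]
  refine ⟨S, ?_, ?_⟩
  · -- independence
    intro x hx y hy hadj
    obtain ⟨hne, hord⟩ := hadj
    set z := x - y with hz
    set v := z.val with hv
    set X := x.val with hX
    set Y := y.val with hY
    have key : Nat.ModEq n X (Y + v) := by
      have hxe : x = z + y := by rw [hz]; ring
      have : X = (v + Y) % n := by rw [hX, hxe, ZMod.val_add]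
      rw [this]
      calc (v + Y) % n ≡ v + Y [MOD n] := Nat.mod_modEq _ _
        _ = Y + v := by ring
    have modfact : ∀ p : ℕ, p ∣ n → p ∣ v → Nat.ModEq p X Y := by
      intro p hpn hpv
      have h1 := key.of_dvd hpn
      have h2 : Nat.ModEq p (Y + v) (Y + 0) :=
        Nat.ModEq.add_left Y (Nat.modEq_zero_iff_dvd.mpr hpv)
      simpa using h1.trans h2
    have notfact : ∀ p : ℕ, p ∣ n → ¬ p ∣ v → ¬ Nat.ModEq p X Y := by
      intro p hpn hpv hXY
      have h1 := key.of_dvd hpn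
      have h2 : Nat.ModEq p (Y + 0) (Y + v) := by
        simpa using hXY.symm.trans h1
      exact hpv (Nat.modEq_zero_iff_dvd.mp (Nat.ModEq.add_left_cancel' Y h2).symm)
    have hxm := (hmem x).mp hx
    have hym := (hmem y).mp hy
    -- from an order hypothesis, get gcd info
    have gcdinfo : ∀ k : ℕ, addOrderOf z = k → n.gcd v * k = n := fun k hk =>
      gcd_mul_order hn0 z hk
    rcases hord with hord | hord | hord
    · -- order α²
      have hg : n.gcd v = β ^ 2 * γ ^ 2 := by
        have := gcdinfo _ hord
        have hrn : n = β ^ 2 * γ ^ 2 * α ^ 2 := by rw [hn]; ring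
        refine Nat.eq_of_mul_eq_mul_right (pow_pos hα0 2) ?_
        rw [this, hrn]
      have hβv : β ∣ v := (dvd_pow_self β two_ne_zero).trans
        ((dvd_mul_right (β ^ 2) (γ ^ 2)).trans (hg ▸ Nat.gcd_dvd_right n v))
      have hγv : γ ∣ v := (dvd_pow_self γ two_ne_zero).trans
        ((dvd_mul_left (γ ^ 2) (β ^ 2)).trans (hg ▸ Nat.gcd_dvd_right n v))
      have hαv : ¬ α ∣ v := by
        intro hav
        have hcop : Nat.Coprime α (β ^ 2 * γ ^ 2) :=
          (((Nat.coprime_primes hα hβ).mpr hαβ.ne).pow_right 2).mul_right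
            (((Nat.coprime_primes hα hγ).mpr hαγ.ne).pow_right 2)
        have hdd : α * (β ^ 2 * γ ^ 2) ∣ v := hcop.mul_dvd_of_dvd_of_dvd hav
          (hg ▸ Nat.gcd_dvd_right n v)
        have hdn : α * (β ^ 2 * γ ^ 2) ∣ n := ⟨α, by rw [hn]; ring⟩
        have := Nat.le_of_dvd (by positivity) (hg ▸ Nat.dvd_gcd hdn hdd)
        nlinarith [pow_pos hβ0 2, pow_pos hγ0 2, hα.two_le]
      have eβ : X % β = Y % β := modfact β hβn hβv
      have eγ : Nat.ModEq γ X Y := modfact γ hγn hγv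
      have hsum : Nat.ModEq γ (X % α + X % β) (Y % α + Y % β) :=
        hxm.symm.trans (eγ.trans hym)
      rw [eβ] at hsum
      have eα' : Nat.ModEq γ (X % α) (Y % α) := Nat.ModEq.add_right_cancel' _ hsum
      have eα : X % α = Y % α := by
        have l1 : X % α < γ := (Nat.mod_lt _ hα0).trans hαγ
        have l2 : Y % α < γ := (Nat.mod_lt _ hα0).trans hαγ
        have := eα'
        unfold Nat.ModEq at this
        rwa [Nat.mod_eq_of_lt l1, Nat.mod_eq_of_lt l2] at this
      exact notfact α hαn hαv eα
    · -- order β²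
      have hg : n.gcd v = α ^ 2 * γ ^ 2 := by
        have := gcdinfo _ hord
        have hrn : n = α ^ 2 * γ ^ 2 * β ^ 2 := by rw [hn]; ring
        refine Nat.eq_of_mul_eq_mul_right (pow_pos hβ0 2) ?_
        rw [this, hrn]
      have hαv : α ∣ v := (dvd_pow_self α two_ne_zero).trans
        ((dvd_mul_right (α ^ 2) (γ ^ 2)).trans (hg ▸ Nat.gcd_dvd_right n v))
      have hγv : γ ∣ v := (dvd_pow_self γ two_ne_zero).trans
        ((dvd_mul_left (γ ^ 2) (α ^ 2)).trans (hg ▸ Nat.gcd_dvd_right n v))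
      have hβv : ¬ β ∣ v := by
        intro hbv
        have hcop : Nat.Coprime β (α ^ 2 * γ ^ 2) :=
          (((Nat.coprime_primes hβ hα).mpr hαβ.ne').pow_right 2).mul_right
            (((Nat.coprime_primes hβ hγ).mpr hβγ.ne).pow_right 2)
        have hdd : β * (α ^ 2 * γ ^ 2) ∣ v := hcop.mul_dvd_of_dvd_of_dvd hbv
          (hg ▸ Nat.gcd_dvd_right n v)
        have hdn : β * (α ^ 2 * γ ^ 2) ∣ n := ⟨β, by rw [hn]; ring⟩
        have := Nat.le_of_dvd (by positivity) (hg ▸ Nat.dvd_gcd hdn hdd)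
        nlinarith [pow_pos hα0 2, pow_pos hγ0 2, hβ.two_le]
      have eα : X % α = Y % α := modfact α hαn hαv
      have eγ : Nat.ModEq γ X Y := modfact γ hγn hγv
      have hsum : Nat.ModEq γ (X % α + X % β) (Y % α + Y % β) :=
        hxm.symm.trans (eγ.trans hym)
      rw [eα] at hsum
      have eβ' : Nat.ModEq γ (X % β) (Y % β) := Nat.ModEq.add_left_cancel' _ hsum
      have eβ : X % β = Y % β := by
        have l1 : X % β < γ := (Nat.mod_lt _ hβ0).trans hβγ
        have l2 : Y % β < γ := (Nat.mod_lt _ hβ0).trans hβγ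
        have := eβ'
        unfold Nat.ModEq at this
        rwa [Nat.mod_eq_of_lt l1, Nat.mod_eq_of_lt l2] at this
      exact notfact β hβn hβv eβ
    · -- order γ²
      have hg : n.gcd v = M := by
        have := gcdinfo _ hord
        refine Nat.eq_of_mul_eq_mul_right (pow_pos hγ0 2) ?_
        rw [this, hnM]
      have hMv : M ∣ v := hg ▸ Nat.gcd_dvd_right n v
      have hγv : ¬ γ ∣ v := by
        intro hgv
        have hdd : M * γ ∣ v := (hcopγM.symm.mul_dvd_of_dvd_of_dvd hMv hgv)
        have hdn : M * γ ∣ n := ⟨γ, by rw [hnM]; ring⟩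
        have := Nat.le_of_dvd hM0 (hg ▸ Nat.dvd_gcd hdn hdd)
        nlinarith [hγ.two_le, hM0]
      have eα : X % α = Y % α := modfact α hαn (hαM.trans hMv)
      have eβ : X % β = Y % β := modfact β hβn (hβM.trans hMv)
      refine notfact γ hγn hγv ?_
      calc X ≡ X % α + X % β [MOD γ] := hxm
        _ = Y % α + Y % β := by rw [eα, eβ]
        _ ≡ Y [MOD γ] := hym.symm
  · -- cardinality
    set u : ZMod γ := ((M : ℕ) : ZMod γ) with hu
    have hu0 : u ≠ 0 := by
      rw [hu, Ne, ZMod.natCast_eq_zero_iff]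
      intro hd
      have h1 : γ ∣ Nat.gcd γ M := Nat.dvd_gcd dvd_rfl hd
      have h2 : γ ∣ 1 := hcopγM ▸ h1
      have h3 := Nat.le_of_dvd one_pos h2
      have := hγ.two_le
      omega
    have hMltn : M < n := by
      rw [hnM]
      have h1 : 1 < γ ^ 2 := by nlinarith [hγ.two_le]
      exact (Nat.lt_mul_iff_one_lt_right hM0).mpr h1
    have hstep : ∀ x : ZMod n, f (x + ((M : ℕ) : ZMod n)) = f x + u := by
      intro x
      set x' := x + ((M : ℕ) : ZMod n) with hx'
      have hv : x'.val = (x.val + M) % n := by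
        rw [hx', ZMod.val_add, ZMod.val_natCast, Nat.mod_eq_of_lt hMltn]
      have hmod : Nat.ModEq n x'.val (x.val + M) := by
        rw [hv]; exact Nat.mod_modEq _ _
      have ep : ∀ p : ℕ, p ∣ n → p ∣ M → x'.val % p = x.val % p := by
        intro p hpn hpM
        have h1 := hmod.of_dvd hpn
        have h2 : Nat.ModEq p (x.val + M) (x.val + 0) :=
          Nat.ModEq.add_left _ (Nat.modEq_zero_iff_dvd.mpr hpM)
        exact (by simpa using h1.trans h2 : Nat.ModEq p x'.val x.val)
      have eγc : ((x'.val : ℕ) : ZMod γ) = ((x.val + M : ℕ) : ZMod γ) :=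
        (ZMod.natCast_eq_natCast_iff _ _ _).mpr (hmod.of_dvd hγn)
      simp only [hf]
      rw [eγc, ep α hαn hαM, ep β hβn hβM]
      push_cast
      ring
    have hstepcard : ∀ c : ZMod γ,
        (Finset.univ.filter fun x : ZMod n => f x = c).card
          = (Finset.univ.filter fun x : ZMod n => f x = c + u).card := by
      intro c
      refine Finset.card_nbij' (fun x => x + ((M : ℕ) : ZMod n))
        (fun x => x - ((M : ℕ) : ZMod n)) ?_ ?_ ?_ ?_
      · intro a ha
        simp only [Finset.mem_coe, Finset.mem_filter, Finset.mem_univ, true_and] at ha ⊢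
        rw [hstep a, ha]
      · intro a ha
        simp only [Finset.mem_coe, Finset.mem_filter, Finset.mem_univ, true_and] at ha ⊢
        have h1 := hstep (a - ((M : ℕ) : ZMod n))
        rw [sub_add_cancel] at h1
        have h2 : f (a - ((M : ℕ) : ZMod n)) + u = c + u := h1.symm.trans ha
        exact add_right_cancel h2
      · intro a _
        exact add_sub_cancel_right a _
      · intro a _
        exact sub_add_cancel a _
    have hallk : ∀ k : ℕ,
        (Finset.univ.filter fun x : ZMod n => f x = (k • u)).card
          = (Finset.univ.filter fun x : ZMod n => f x = 0).card := by
      intro k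
      induction k with
      | zero => simp
      | succ k ih =>
        rw [succ_nsmul, ← hstepcard, ih]
    have hall : ∀ c : ZMod γ,
        (Finset.univ.filter fun x : ZMod n => f x = c).card
          = (Finset.univ.filter fun x : ZMod n => f x = 0).card := by
      intro c
      have hc : (((c * u⁻¹).val : ℕ) • u) = c := by
        rw [nsmul_eq_mul, ZMod.natCast_val, ZMod.cast_id, mul_assoc,
          inv_mul_cancel₀ hu0, mul_one]
      rw [← hc, hallk]
    have hsum : (Finset.univ : Finset (ZMod n)).card
        = ∑ c : ZMod γ, (Finset.univ.filter fun x : ZMod n => f x = c).card :=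
      Finset.card_eq_sum_card_fiberwise (fun x _ => Finset.mem_univ (f x))
    rw [Finset.card_univ, ZMod.card] at hsum
    have hfin : n = γ * (Finset.univ.filter fun x : ZMod n => f x = 0).card := by
      refine hsum.trans ?_
      calc ∑ c : ZMod γ, (Finset.univ.filter fun x : ZMod n => f x = c).card
          = ∑ _c : ZMod γ, (Finset.univ.filter fun x : ZMod n => f x = 0).card :=
            Finset.sum_congr rfl fun c _ => hall c
        _ = Fintype.card (ZMod γ) * (Finset.univ.filter fun x : ZMod n => f x = 0).card := by
            rw [Finset.sum_const, Finset.card_univ, smul_eq_mul]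
        _ = γ * (Finset.univ.filter fun x : ZMod n => f x = 0).card := by rw [ZMod.card]
    have hN0 : (Finset.univ.filter fun x : ZMod n => f x = 0).card = α ^ 2 * β ^ 2 * γ := by
      refine Nat.eq_of_mul_eq_mul_left hγ0 ?_
      rw [← hfin, hn]; ring
    have hScard : S = ↑(Finset.univ.filter fun x : ZMod n => f x = 0) := by
      ext x
      simp [hSdef]
    rw [hScard, Set.ncard_coe_finset]
    exact hN0

theorem stmt_16 (α β γ : ℕ) (hα : α.Prime) (hβ : β.Prime) (hγ : γ.Prime)
    (hαβ : α < β) (hβγ : β < γ) :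
    IsGreatest {m : ℕ | ∃ S : Set (ZMod (α ^ 2 * β ^ 2 * γ ^ 2)),
        (∀ x ∈ S, ∀ y ∈ S, ¬ (cayP2 (α ^ 2 * β ^ 2 * γ ^ 2) α β γ).Adj x y) ∧ S.ncard = m}
      (α ^ 2 * β ^ 2 * γ) := by
  constructor
  · obtain ⟨S, h1, h2⟩ := lower_bound α β γ hα hβ hγ hαβ hβγ rfl
    exact ⟨S, h1, h2⟩
  · rintro m ⟨S, h1, rfl⟩
    exact upper_bound α β γ hα hβ hγ hαβ hβγ rfl S h1
end

section
/- If α = 2 (so that β and γ are odd primes with 2 < β < γ and n = 4·β²·γ²), then the graph Cay(G,C) is Hamiltonian: it contains a cycle passing through every vertex exactly once. -/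
open SimpleGraph


namespace HamAux

variable {V : Type*} {G : SimpleGraph V}

def chain (f : ℕ → V) (hadj : ∀ k, G.Adj (f k) (f (k+1))) : (m : ℕ) → G.Walk (f 0) (f m)
  | 0 => .nil
  | (m+1) => (chain f hadj m).concat (hadj m)

lemma chain_support (f : ℕ → V) (hadj : ∀ k, G.Adj (f k) (f (k+1))) (m : ℕ) :
    (chain f hadj m).support = (List.range (m+1)).map f := by
  induction m with
  | zero => simp [chain, List.range_succ]
  | succ m ih =>
      rw [chain, Walk.support_concat, ih]
      simp [List.range_succ]

lemma chain_edges (f : ℕ → V) (hadj : ∀ k, G.Adj (f k) (f (k+1))) (m : ℕ) :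
    (chain f hadj m).edges = (List.range m).map (fun k => s(f k, f (k+1))) := by
  induction m with
  | zero => simp [chain, List.range_succ]
  | succ m ih =>
      rw [chain, Walk.edges_concat, ih]
      simp [List.range_succ]

theorem ham_of_enum [Fintype V] [DecidableEq V] (f : ℕ → V) (n : ℕ) (hn : 3 ≤ n)
    (hcard : Fintype.card V = n)
    (hadj : ∀ k < n, G.Adj (f k) (f (k+1)))
    (hinj : ∀ i < n, ∀ j < n, f i = f j → i = j)
    (hper : f n = f 0) :
    ∃ v, ∃ p : G.Walk v v, p.IsHamiltonianCycle := by
  classical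
  have hn0 : 0 < n := by omega
  set f' : ℕ → V := fun k => f (k % n) with hf'
  have hmodlt : ∀ k : ℕ, k % n < n := fun k => Nat.mod_lt _ hn0
  have hf'adj : ∀ k, G.Adj (f' k) (f' (k+1)) := by
    intro k
    have hb : (k+1) % n = (k % n + 1) % n := (Nat.mod_add_mod k n 1).symm
    show G.Adj (f (k % n)) (f ((k+1) % n))
    rw [hb]
    rcases Nat.lt_or_ge (k % n + 1) n with h | h
    · rw [Nat.mod_eq_of_lt h]
      exact hadj _ (hmodlt k)
    · have h2 : k % n + 1 = n := by have := hmodlt k; omega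
      have h3 := hadj (k % n) (hmodlt k)
      rw [h2] at h3
      rw [h2, Nat.mod_self, ← hper]
      exact h3
  -- injectivity of f' on shifted indices
  have hinj' : ∀ i < n, ∀ j < n, f' (i+1) = f' (j+1) → i = j := by
    intro i hi j hj hij
    have hij' : f ((i+1) % n) = f ((j+1) % n) := hij
    have h := hinj _ (hmodlt (i+1)) _ (hmodlt (j+1)) hij'
    rcases eq_or_lt_of_le (show i + 1 ≤ n by omega) with h1 | h1 <;>
      rcases eq_or_lt_of_le (show j + 1 ≤ n by omega) with h2 | h2
    · omega
    · rw [h1, Nat.mod_self, Nat.mod_eq_of_lt h2] at h; omega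
    · rw [h2, Nat.mod_self, Nat.mod_eq_of_lt h1] at h; omega
    · rw [Nat.mod_eq_of_lt h1, Nat.mod_eq_of_lt h2] at h; omega
  have hclose : f' n = f' 0 := by
    show f (n % n) = f (0 % n)
    rw [Nat.mod_self, Nat.zero_mod]
  refine ⟨f' 0, (chain f' hf'adj n).copy rfl hclose, ?_⟩
  have hsupp : ((chain f' hf'adj n).copy rfl hclose).support
      = (List.range (n+1)).map f' := by
    rw [Walk.support_copy, chain_support]
  have hedg : ((chain f' hf'adj n).copy rfl hclose).edges
      = (List.range n).map (fun k => s(f' k, f' (k+1))) := by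
    rw [Walk.edges_copy, chain_edges]
  have htail : ((chain f' hf'adj n).copy rfl hclose).support.tail
      = (List.range n).map (fun k => f' (k+1)) := by
    rw [hsupp, List.range_succ_eq_map]
    simp [Function.comp]
  have htail_nodup : ((chain f' hf'adj n).copy rfl hclose).support.tail.Nodup := by
    rw [htail]
    refine List.Nodup.map_on ?_ List.nodup_range
    intro i hi j hj hij
    exact hinj' i (List.mem_range.mp hi) j (List.mem_range.mp hj) hij
  rw [Walk.isHamiltonianCycle_iff_isCycle_and_support_count_tail_eq_one]
  constructor
  · rw [Walk.isCycle_def]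
    refine ⟨⟨?_⟩, ?_, htail_nodup⟩
    · -- edges nodup
      rw [hedg]
      refine List.Nodup.map_on ?_ List.nodup_range
      intro i hi j hj hij
      rw [List.mem_range] at hi hj
      rw [Sym2.eq_iff] at hij
      rcases hij with ⟨h1, _⟩ | ⟨h1, h2⟩
      · have := hinj _ (hmodlt i) _ (hmodlt j) h1
        rw [Nat.mod_eq_of_lt hi, Nat.mod_eq_of_lt hj] at this
        exact this
      · -- f' i = f' (j+1), f' (i+1) = f' j
        have e1 : i % n = (j+1) % n := hinj _ (hmodlt i) _ (hmodlt (j+1)) h1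
        have e2 : (i+1) % n = j % n := hinj _ (hmodlt (i+1)) _ (hmodlt j) h2
        rw [Nat.mod_eq_of_lt hi] at e1
        rw [Nat.mod_eq_of_lt hj] at e2
        rcases eq_or_lt_of_le (show i + 1 ≤ n by omega) with hi1 | hi1 <;>
          rcases eq_or_lt_of_le (show j + 1 ≤ n by omega) with hj1 | hj1
        · omega
        · rw [Nat.mod_eq_of_lt hj1] at e1
          rw [hi1, Nat.mod_self] at e2
          omega
        · rw [hj1, Nat.mod_self] at e1
          rw [Nat.mod_eq_of_lt hi1] at e2
          have : (1:ℕ) % n = 1 := Nat.mod_eq_of_lt (by omega)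
          omega
        · rw [Nat.mod_eq_of_lt hj1] at e1
          rw [Nat.mod_eq_of_lt hi1] at e2
          omega
    · -- not nil
      intro hnil
      have : ((chain f' hf'adj n).copy rfl hclose).edges = [] := by rw [hnil]; rfl
      rw [hedg] at this
      have := congrArg List.length this
      simp at this
      omega
  · -- counts
    intro a
    have hlen : (((chain f' hf'adj n).copy rfl hclose).support.tail).length = n := by
      rw [htail]; simp
    have hmem : a ∈ ((chain f' hf'adj n).copy rfl hclose).support.tail := by
      have hfin : (((chain f' hf'adj n).copy rfl hclose).support.tail).toFinset
          = Finset.univ := by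
        apply Finset.eq_univ_of_card
        rw [List.toFinset_card_of_nodup htail_nodup, hlen, hcard]
      have : a ∈ (((chain f' hf'adj n).copy rfl hclose).support.tail).toFinset := by
        rw [hfin]; exact Finset.mem_univ a
      simpa using this
    exact List.count_eq_one_of_mem htail_nodup hmem

end HamAux


namespace SnakeAux

variable {A : Type*}

/-- one step around the cycle `C_p` on `{0,…,p-1}` (forward-use cases only). -/
def RowStep (p a b : ℕ) : Prop := b = a + 1 ∨ a = b + 1 ∨ (a = p - 1 ∧ b = 0)

def snakeF (p M : ℕ) (g : ℕ → A) (k : ℕ) : ℕ × A :=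
  if k < M * (p - 1) then
    (if (k / (p-1)) % 2 = 0 then k % (p-1) + 1 else p - 1 - k % (p-1), g (k / (p-1)))
  else (0, g (M - 1 - (k - M * (p-1))))

def snake (p M : ℕ) (g : ℕ → A) (k : ℕ) : ℕ × A := snakeF p M g (k % (p * M))

variable {p M : ℕ} (g : ℕ → A)

lemma N_eq (hp : 2 ≤ p) : p * M = M * (p-1) + M := by
  have hp1 : p = (p-1) + 1 := by omega
  calc p * M = ((p-1)+1) * M := by rw [← hp1]
    _ = M * (p-1) + M := by ring

lemma snakeF_A (hp : 2 ≤ p) {j r : ℕ} (hj : j < M) (hr : r < p - 1) :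
    snakeF p M g ((p-1) * j + r) = (if j % 2 = 0 then r + 1 else p - 1 - r, g j) := by
  have hq : 0 < p - 1 := by omega
  have hmul : (p-1) * (j+1) ≤ (p-1) * M := Nat.mul_le_mul_left _ (by omega)
  have hmul2 : (p-1) * (j+1) = (p-1) * j + (p-1) := by ring
  have hcomm : (p-1) * M = M * (p-1) := Nat.mul_comm _ _
  have hlt : (p-1) * j + r < M * (p - 1) := by omega
  have hdiv : ((p-1) * j + r) / (p-1) = j := by
    rw [Nat.mul_add_div hq, Nat.div_eq_of_lt hr, Nat.add_zero]
  have hmod : ((p-1) * j + r) % (p-1) = r := by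
    rw [Nat.mul_add_mod, Nat.mod_eq_of_lt hr]
  rw [snakeF, if_pos hlt, hdiv, hmod]

lemma snakeF_B (hp : 2 ≤ p) {t : ℕ} (ht : t < M) :
    snakeF p M g (M * (p-1) + t) = (0, g (M - 1 - t)) := by
  rw [snakeF, if_neg (by omega), Nat.add_sub_cancel_left]

lemma snakeF_bound (hp : 2 ≤ p) (hM : 0 < M) {k : ℕ} (hk : k < p * M) :
    (snakeF p M g k).1 < p ∧ ∃ j < M, (snakeF p M g k).2 = g j := by
  have hq : 0 < p - 1 := by omega
  have hN := N_eq (M := M) hp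
  by_cases hA : k < M * (p - 1)
  · set j := k / (p-1) with hj
    set r := k % (p-1) with hr
    have hrlt : r < p - 1 := Nat.mod_lt _ hq
    have hjlt : j < M := by
      rw [hj, Nat.div_lt_iff_lt_mul hq]; exact hA
    have hdm : (p-1) * j + r = k := Nat.div_add_mod k (p-1)
    rw [← hdm, snakeF_A g hp hjlt hrlt]
    refine ⟨?_, j, hjlt, rfl⟩
    by_cases hpar : j % 2 = 0 <;> simp [hpar] <;> omega
  · have ht : k - M * (p-1) < M := by omega
    have hk2 : k = M * (p-1) + (k - M * (p-1)) := by omega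
    rw [hk2, snakeF_B g hp ht]
    exact ⟨by omega, M - 1 - (k - M * (p-1)), by omega, rfl⟩

lemma snake_bound (hp : 2 ≤ p) (hM : 0 < M) (k : ℕ) :
    (snake p M g k).1 < p ∧ ∃ j < M, (snake p M g k).2 = g j := by
  have hN : 0 < p * M := by positivity
  exact snakeF_bound g hp hM (Nat.mod_lt _ hN)

lemma snakeF_inj (hp : 2 ≤ p) (hM : 0 < M)
    (hg : ∀ i < M, ∀ j < M, g i = g j → i = j) :
    ∀ k₁ < p * M, ∀ k₂ < p * M, snakeF p M g k₁ = snakeF p M g k₂ → k₁ = k₂ := by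
  have hq : 0 < p - 1 := by omega
  have hN := N_eq (M := M) hp
  intro k₁ hk₁ k₂ hk₂ heq
  by_cases h1 : k₁ < M * (p - 1) <;> by_cases h2 : k₂ < M * (p - 1)
  · -- both in phase A
    have hr1 : k₁ % (p-1) < p - 1 := Nat.mod_lt _ hq
    have hj1 : k₁ / (p-1) < M := by rw [Nat.div_lt_iff_lt_mul hq]; exact h1
    have hd1 : (p-1) * (k₁ / (p-1)) + k₁ % (p-1) = k₁ := Nat.div_add_mod _ _
    have hr2 : k₂ % (p-1) < p - 1 := Nat.mod_lt _ hq
    have hj2 : k₂ / (p-1) < M := by rw [Nat.div_lt_iff_lt_mul hq]; exact h2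
    have hd2 : (p-1) * (k₂ / (p-1)) + k₂ % (p-1) = k₂ := Nat.div_add_mod _ _
    rw [← hd1, ← hd2, snakeF_A g hp hj1 hr1, snakeF_A g hp hj2 hr2, Prod.mk.injEq] at heq
    have hjj : k₁ / (p-1) = k₂ / (p-1) := hg _ hj1 _ hj2 heq.2
    have hrow := heq.1
    rw [hjj] at hrow hd1
    by_cases hpar : (k₂ / (p-1)) % 2 = 0
    · rw [if_pos hpar, if_pos hpar] at hrow; omega
    · rw [if_neg hpar, if_neg hpar] at hrow; omega
  · -- A vs B : contradiction on rows
    exfalso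
    have hr1 : k₁ % (p-1) < p - 1 := Nat.mod_lt _ hq
    have hj1 : k₁ / (p-1) < M := by rw [Nat.div_lt_iff_lt_mul hq]; exact h1
    have hd1 : (p-1) * (k₁ / (p-1)) + k₁ % (p-1) = k₁ := Nat.div_add_mod _ _
    have ht2 : k₂ - M * (p-1) < M := by omega
    have hk2' : k₂ = M * (p-1) + (k₂ - M * (p-1)) := by omega
    rw [← hd1, hk2', snakeF_A g hp hj1 hr1, snakeF_B g hp ht2, Prod.mk.injEq] at heq
    have := heq.1
    by_cases hpar : (k₁ / (p-1)) % 2 = 0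
    · rw [if_pos hpar] at this; omega
    · rw [if_neg hpar] at this; omega
  · -- B vs A
    exfalso
    have hr2 : k₂ % (p-1) < p - 1 := Nat.mod_lt _ hq
    have hj2 : k₂ / (p-1) < M := by rw [Nat.div_lt_iff_lt_mul hq]; exact h2
    have hd2 : (p-1) * (k₂ / (p-1)) + k₂ % (p-1) = k₂ := Nat.div_add_mod _ _
    have ht1 : k₁ - M * (p-1) < M := by omega
    have hk1' : k₁ = M * (p-1) + (k₁ - M * (p-1)) := by omega
    rw [hk1', ← hd2, snakeF_B g hp ht1, snakeF_A g hp hj2 hr2, Prod.mk.injEq] at heq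
    have := heq.1
    by_cases hpar : (k₂ / (p-1)) % 2 = 0
    · rw [if_pos hpar] at this; omega
    · rw [if_neg hpar] at this; omega
  · -- both B
    have ht1 : k₁ - M * (p-1) < M := by omega
    have hk1' : k₁ = M * (p-1) + (k₁ - M * (p-1)) := by omega
    have ht2 : k₂ - M * (p-1) < M := by omega
    have hk2' : k₂ = M * (p-1) + (k₂ - M * (p-1)) := by omega
    rw [hk1', hk2', snakeF_B g hp ht1, snakeF_B g hp ht2, Prod.mk.injEq] at heq
    have := hg _ (show M - 1 - (k₁ - M * (p-1)) < M by omega) _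
      (show M - 1 - (k₂ - M * (p-1)) < M by omega) heq.2
    omega

lemma snake_inj (hp : 2 ≤ p) (hM : 0 < M)
    (hg : ∀ i < M, ∀ j < M, g i = g j → i = j) :
    ∀ k₁ < p * M, ∀ k₂ < p * M, snake p M g k₁ = snake p M g k₂ → k₁ = k₂ := by
  intro k₁ hk₁ k₂ hk₂ heq
  rw [snake, snake, Nat.mod_eq_of_lt hk₁, Nat.mod_eq_of_lt hk₂] at heq
  exact snakeF_inj g hp hM hg _ hk₁ _ hk₂ heq

lemma snake_step (hp : 2 ≤ p) (hM : 0 < M) (hModd : M % 2 = 1) (k : ℕ) :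
    ((snake p M g (k+1)).2 = (snake p M g k).2 ∧
      RowStep p (snake p M g k).1 (snake p M g (k+1)).1)
    ∨ ((snake p M g (k+1)).1 = (snake p M g k).1 ∧ ∃ j, j + 1 < M ∧
        (((snake p M g k).2 = g j ∧ (snake p M g (k+1)).2 = g (j+1)) ∨
         ((snake p M g k).2 = g (j+1) ∧ (snake p M g (k+1)).2 = g j))) := by
  have hq : 0 < p - 1 := by omega
  have hN := N_eq (M := M) hp
  have hN0 : 0 < p * M := by positivity
  have hsn : snake p M g k = snakeF p M g (k % (p * M)) := rfl
  have hsn1 : snake p M g (k+1) = snakeF p M g ((k % (p * M) + 1) % (p * M)) := by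
    rw [snake, Nat.mod_add_mod]
  set m := k % (p * M) with hm
  have hmlt : m < p * M := Nat.mod_lt _ hN0
  rw [hsn, hsn1]
  clear hsn hsn1 hm
  by_cases hA : m < M * (p - 1)
  · -- phase A
    set j := m / (p-1) with hj
    set r := m % (p-1) with hr
    have hrlt : r < p - 1 := Nat.mod_lt _ hq
    have hjlt : j < M := by rw [hj, Nat.div_lt_iff_lt_mul hq]; exact hA
    have hdm : (p-1) * j + r = m := Nat.div_add_mod m (p-1)
    by_cases hlast : r + 1 < p - 1
    · -- stay in same column
      have e1 : m + 1 = (p-1) * j + (r+1) := by omega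
      have hlt1 : m + 1 < p * M := by
        have : (p-1) * (j+1) ≤ (p-1) * M := Nat.mul_le_mul_left _ (by omega)
        have h2 : (p-1) * (j+1) = (p-1) * j + (p-1) := by ring
        have h3 : (p-1) * M = M * (p-1) := Nat.mul_comm _ _
        omega
      rw [Nat.mod_eq_of_lt hlt1, e1, ← hdm, snakeF_A g hp hjlt hrlt,
        snakeF_A g hp hjlt (by omega)]
      left
      refine ⟨rfl, ?_⟩
      by_cases hpar : j % 2 = 0 <;> simp only [hpar, if_pos, if_true, if_neg, if_false] <;>
        simp [hpar, RowStep] <;> omega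
    · have hr1 : r + 1 = p - 1 := by omega
      by_cases hjM : j + 1 < M
      · -- move to next column
        have e1 : m + 1 = (p-1) * (j+1) + 0 := by
          have : (p-1) * (j+1) = (p-1) * j + (p-1) := by ring
          omega
        have hlt1 : m + 1 < p * M := by
          have h2 : (p-1) * (j+1) + 0 < M * (p-1) := by
            have : (p-1) * (j+1+1) ≤ (p-1) * M := Nat.mul_le_mul_left _ (by omega)
            have h4 : (p-1) * (j+1+1) = (p-1) * (j+1) + (p-1) := by ring
            have h5 : (p-1) * M = M * (p-1) := Nat.mul_comm _ _
            omega
          omega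
        rw [Nat.mod_eq_of_lt hlt1, e1, ← hdm, snakeF_A g hp hjlt hrlt,
          snakeF_A g hp hjM hq]
        right
        refine ⟨?_, j, hjM, Or.inl ⟨rfl, rfl⟩⟩
        have hpar2 : (j+1) % 2 = (if j % 2 = 0 then 1 else 0) := by
          by_cases hpar : j % 2 = 0 <;> simp [hpar] <;> omega
        by_cases hpar : j % 2 = 0 <;> simp [hpar, hpar2] <;> omega
      · -- last column of phase A: j = M - 1, move to phase B
        have hjM1 : j = M - 1 := by omega
        have e1 : m + 1 = M * (p-1) + 0 := by
          have h2 : (p-1) * (j+1) = (p-1) * j + (p-1) := by ring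
          have h3 : (p-1) * M = M * (p-1) := Nat.mul_comm _ _
          have h4 : j + 1 = M := by omega
          rw [← h3, ← h4]
          omega
        have hlt1 : m + 1 < p * M := by omega
        have hpar : j % 2 = 0 := by omega
        rw [Nat.mod_eq_of_lt hlt1, e1, ← hdm, snakeF_A g hp hjlt hrlt, snakeF_B g hp hM]
        left
        constructor
        · simp only []
          have : M - 1 - 0 = j := by omega
          rw [this]
        · simp only [hpar, if_true, if_pos rfl]
          right; right
          constructor <;> omega
  · -- phase B
    have ht : m - M * (p-1) < M := by omega
    have hk2 : m = M * (p-1) + (m - M * (p-1)) := by omega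
    set t := m - M * (p-1) with htdef
    by_cases htM : t + 1 < M
    · have e1 : m + 1 = M * (p-1) + (t + 1) := by omega
      have hlt1 : m + 1 < p * M := by omega
      rw [Nat.mod_eq_of_lt hlt1, e1, hk2, snakeF_B g hp ht, snakeF_B g hp htM]
      right
      refine ⟨rfl, M - 2 - t, by omega, Or.inr ⟨?_, ?_⟩⟩
      · have : M - 1 - t = (M - 2 - t) + 1 := by omega
        rw [this]
      · have : M - 1 - (t+1) = M - 2 - t := by omega
        rw [this]
    · -- wrap around: m = p*M - 1
      have htM1 : t = M - 1 := by omega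
      have e1 : m + 1 = p * M := by omega
      have e0 : (m + 1) % (p * M) = 0 := by rw [e1, Nat.mod_self]
      have hz : (0:ℕ) = (p-1) * 0 + 0 := by ring
      rw [e0, hk2, snakeF_B g hp ht, hz, snakeF_A g hp hM hq]
      left
      constructor
      · simp only [if_pos (by norm_num : (0:ℕ) % 2 = 0)]
        have : M - 1 - t = 0 := by omega
        rw [this]
      · simp only []
        left
        have : M - 1 - t = 0 := by omega
        simp [this, RowStep]

end SnakeAux



section MainAux

lemma cast_inj_of_lt {m a b : ℕ} [NeZero m] (ha : a < m) (hb : b < m)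
    (h : (a : ZMod m) = b) : a = b := by
  have := congrArg ZMod.val h
  rwa [ZMod.val_cast_of_lt ha, ZMod.val_cast_of_lt hb] at this

lemma rowstep_cast {p a b : ℕ} (hp : 2 ≤ p) (h : SnakeAux.RowStep p a b) :
    ((b : ZMod p) - a = 1) ∨ ((b : ZMod p) - a = -1) := by
  rcases h with h | h | ⟨h1, h2⟩
  · left; rw [h]; push_cast; ring
  · right; rw [h]; push_cast; ring
  · left
    rw [h1, h2, Nat.cast_zero, Nat.cast_sub (by omega), Nat.cast_one, ZMod.natCast_self]
    ring

lemma pm_neg {m : ℕ} {x y : ZMod m} (h : x - y = 1 ∨ x - y = -1) :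
    y - x = 1 ∨ y - x = -1 := by
  rcases h with h | h
  · right; rw [← neg_sub x y, h]
  · left; rw [← neg_sub x y, h, neg_neg]

lemma ord_pm {m : ℕ} {x : ZMod m} (h : x = 1 ∨ x = -1) : addOrderOf x = m := by
  rcases h with h | h <;> subst h
  · exact ZMod.addOrderOf_one m
  · rw [show (-1 : ZMod m) = -(1 : ZMod m) by ring, addOrderOf_neg, ZMod.addOrderOf_one]

lemma ord_fst {m1 m2 m3 : ℕ} {x : ZMod m1} (h : x = 1 ∨ x = -1) :
    addOrderOf ((x, (0 : ZMod m2)), (0 : ZMod m3)) = m1 := by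
  rw [Prod.addOrderOf, Prod.addOrderOf, ord_pm h, addOrderOf_zero, addOrderOf_zero,
    Nat.lcm_one_right, Nat.lcm_one_right]

lemma ord_mid {m1 m2 m3 : ℕ} {x : ZMod m2} (h : x = 1 ∨ x = -1) :
    addOrderOf (((0 : ZMod m1), x), (0 : ZMod m3)) = m2 := by
  rw [Prod.addOrderOf, Prod.addOrderOf, ord_pm h, addOrderOf_zero, addOrderOf_zero,
    Nat.lcm_one_left, Nat.lcm_one_right]

lemma ord_last {m1 m2 m3 : ℕ} {x : ZMod m3} (h : x = 1 ∨ x = -1) :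
    addOrderOf (((0 : ZMod m1), (0 : ZMod m2)), x) = m3 := by
  rw [Prod.addOrderOf, Prod.addOrderOf, ord_pm h, addOrderOf_zero, addOrderOf_zero,
    Nat.lcm_one_left, Nat.lcm_one_left]

end MainAux

theorem stmt_17 (α β γ : ℕ) (hα : α.Prime) (hβ : β.Prime) (hγ : γ.Prime)
    (hαβ : α < β) (hβγ : β < γ) (h2 : α = 2) :
    ∃ (v : ZMod (α ^ 2 * β ^ 2 * γ ^ 2))
      (p : (cayP2 (α ^ 2 * β ^ 2 * γ ^ 2) α β γ).Walk v v), p.IsHamiltonianCycle := by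
  subst h2
  have hβ2 : 2 < β := hαβ
  have hγ2 : 2 < γ := by omega
  have hβ0 : 0 < β := by omega
  have hγ0 : 0 < γ := by omega
  have hB0 : 0 < β ^ 2 := by nlinarith
  have hC0 : 0 < γ ^ 2 := by nlinarith
  have hB2 : 2 ≤ β ^ 2 := by nlinarith
  have hB9 : 9 ≤ β ^ 2 := by nlinarith
  have hC9 : 9 ≤ γ ^ 2 := by nlinarith
  have hβodd : β % 2 = 1 := Nat.odd_iff.mp (hβ.odd_of_ne_two (by omega))
  have hγodd : γ % 2 = 1 := Nat.odd_iff.mp (hγ.odd_of_ne_two (by omega))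
  have hCodd : γ ^ 2 % 2 = 1 := Nat.odd_iff.mp (Odd.pow (Nat.odd_iff.mpr hγodd))
  have hModdv : (β ^ 2 * γ ^ 2) % 2 = 1 :=
    Nat.odd_iff.mp ((Odd.pow (Nat.odd_iff.mpr hβodd)).mul (Odd.pow (Nat.odd_iff.mpr hγodd)))
  have hM0 : 0 < β ^ 2 * γ ^ 2 := Nat.mul_pos hB0 hC0
  haveI : NeZero ((2:ℕ) ^ 2) := ⟨by norm_num⟩
  haveI : NeZero (β ^ 2) := ⟨hB0.ne'⟩
  haveI : NeZero (γ ^ 2) := ⟨hC0.ne'⟩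
  haveI : NeZero (2 ^ 2 * β ^ 2 * γ ^ 2) :=
    ⟨Nat.mul_ne_zero (Nat.mul_ne_zero (by norm_num) hB0.ne') hC0.ne'⟩
  have hco2 : Nat.Coprime (2 ^ 2) (β ^ 2) :=
    Nat.Coprime.pow _ _ ((Nat.coprime_primes Nat.prime_two hβ).mpr (by omega))
  have hco1 : Nat.Coprime (2 ^ 2 * β ^ 2) (γ ^ 2) :=
    Nat.Coprime.mul (Nat.Coprime.pow _ _ ((Nat.coprime_primes Nat.prime_two hγ).mpr (by omega)))
      (Nat.Coprime.pow _ _ ((Nat.coprime_primes hβ hγ).mpr (by omega)))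
  set ψ : ZMod (2 ^ 2 * β ^ 2 * γ ^ 2) ≃+ (ZMod (2 ^ 2) × ZMod (β ^ 2)) × ZMod (γ ^ 2) :=
    (ZMod.chineseRemainder hco1).toAddEquiv.trans
      (AddEquiv.prodCongr (ZMod.chineseRemainder hco2).toAddEquiv
        (AddEquiv.refl (ZMod (γ ^ 2)))) with hψdef
  set g1 : ℕ → ℕ × ℕ := SnakeAux.snake (β ^ 2) (γ ^ 2) id with hg1def
  set g2 : ℕ → ℕ × (ℕ × ℕ) := SnakeAux.snake 4 (β ^ 2 * γ ^ 2) g1 with hg2def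
  set f : ℕ → ZMod (2 ^ 2 * β ^ 2 * γ ^ 2) := fun k =>
    ψ.symm ((((g2 k).1 : ZMod (2 ^ 2)), ((g2 k).2.1 : ZMod (β ^ 2))),
      ((g2 k).2.2 : ZMod (γ ^ 2))) with hfdef
  -- bounds
  have hg1b : ∀ j, (g1 j).1 < β ^ 2 ∧ (g1 j).2 < γ ^ 2 := by
    intro j
    obtain ⟨h1, i, hi, hcol⟩ := SnakeAux.snake_bound id hB2 hC0 j
    rw [← hg1def] at h1 hcol
    exact ⟨h1, by rw [hcol]; exact hi⟩
  have hg2b : ∀ k, (g2 k).1 < 4 ∧ (g2 k).2.1 < β ^ 2 ∧ (g2 k).2.2 < γ ^ 2 := by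
    intro k
    obtain ⟨h1, j, hj, hcol⟩ := SnakeAux.snake_bound (p := 4) g1 (by norm_num) hM0 k
    rw [← hg2def] at h1 hcol
    exact ⟨h1, by rw [hcol]; exact (hg1b j).1, by rw [hcol]; exact (hg1b j).2⟩
  -- injectivity
  have hg1inj := SnakeAux.snake_inj id hB2 hC0 (fun i _ j _ h => h)
  rw [← hg1def] at hg1inj
  have hg2inj := SnakeAux.snake_inj g1 (by norm_num : 2 ≤ 4) hM0
    (fun i hi j hj h => hg1inj i hi j hj h)
  rw [← hg2def] at hg2inj
  -- difference structure of the inner snake g1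
  have hg1diff : ∀ j : ℕ,
      (((((g1 (j+1)).1 : ZMod (β ^ 2)) - (g1 j).1 = 1 ∨
         ((g1 (j+1)).1 : ZMod (β ^ 2)) - (g1 j).1 = -1) ∧
        ((g1 (j+1)).2 : ZMod (γ ^ 2)) - (g1 j).2 = 0))
      ∨ ((((g1 (j+1)).1 : ZMod (β ^ 2)) - (g1 j).1 = 0) ∧
         (((g1 (j+1)).2 : ZMod (γ ^ 2)) - (g1 j).2 = 1 ∨
          ((g1 (j+1)).2 : ZMod (γ ^ 2)) - (g1 j).2 = -1)) := by
    intro j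
    have hstep := SnakeAux.snake_step id hB2 hC0 hCodd j
    rw [← hg1def] at hstep
    simp only [id_eq] at hstep
    rcases hstep with ⟨hcol, hrow⟩ | ⟨hrow, i, hiM, hcase⟩
    · exact Or.inl ⟨rowstep_cast hB2 hrow, by rw [hcol]; exact sub_self _⟩
    · refine Or.inr ⟨by rw [hrow]; exact sub_self _, ?_⟩
      rcases hcase with ⟨ha, hb⟩ | ⟨ha, hb⟩
      · left; rw [ha, hb]; push_cast; ring
      · right; rw [ha, hb]; push_cast; ring
  -- periodicity
  have hper : f (2 ^ 2 * β ^ 2 * γ ^ 2) = f 0 := by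
    have hg2per : g2 (2 ^ 2 * β ^ 2 * γ ^ 2) = g2 0 := by
      rw [hg2def]
      show SnakeAux.snakeF _ _ _ ((2 ^ 2 * β ^ 2 * γ ^ 2) % (4 * (β ^ 2 * γ ^ 2)))
        = SnakeAux.snakeF _ _ _ (0 % (4 * (β ^ 2 * γ ^ 2)))
      rw [Nat.zero_mod, show (2 ^ 2 * β ^ 2 * γ ^ 2) = 4 * (β ^ 2 * γ ^ 2) by ring,
        Nat.mod_self]
    simp only [hfdef, hg2per]
  refine HamAux.ham_of_enum (G := cayP2 (2 ^ 2 * β ^ 2 * γ ^ 2) 2 β γ) f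
    (2 ^ 2 * β ^ 2 * γ ^ 2) (by nlinarith) (ZMod.card _) ?_ ?_ hper
  · -- adjacency
    intro k hk
    have hstep := SnakeAux.snake_step g1 (by norm_num : 2 ≤ 4) hM0 hModdv k
    rw [← hg2def] at hstep
    have hE : f k - f (k+1) = ψ.symm
        (((((g2 k).1 : ZMod (2 ^ 2)) - (g2 (k+1)).1,
           ((g2 k).2.1 : ZMod (β ^ 2)) - (g2 (k+1)).2.1),
           ((g2 k).2.2 : ZMod (γ ^ 2)) - (g2 (k+1)).2.2)) := by
      simp only [hfdef]
      rw [← map_sub, Prod.mk_sub_mk, Prod.mk_sub_mk]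
    have hordE : addOrderOf (f k - f (k+1)) = addOrderOf
        ((((g2 k).1 : ZMod (2 ^ 2)) - (g2 (k+1)).1,
          ((g2 k).2.1 : ZMod (β ^ 2)) - (g2 (k+1)).2.1),
          ((g2 k).2.2 : ZMod (γ ^ 2)) - (g2 (k+1)).2.2) := by
      rw [hE]; exact AddEquiv.addOrderOf_eq ψ.symm _
    have hORD : addOrderOf (f k - f (k+1)) = 2 ^ 2 ∨
        addOrderOf (f k - f (k+1)) = β ^ 2 ∨ addOrderOf (f k - f (k+1)) = γ ^ 2 := by
      rw [hordE]
      rcases hstep with ⟨hcol, hrow⟩ | ⟨hrow, j, hjM, hcase⟩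
      · -- row move in the ZMod 4 coordinate
        left
        have hrow' : SnakeAux.RowStep (2 ^ 2) (g2 k).1 (g2 (k+1)).1 := by
          rw [show (2:ℕ) ^ 2 = 4 by norm_num]; exact hrow
        have hpm := pm_neg (rowstep_cast (by norm_num) hrow')
        rw [hcol]
        simp only [sub_self]
        exact ord_fst hpm
      · -- column move
        have hc0 : ((g2 k).1 : ZMod (2 ^ 2)) - ((g2 (k+1)).1 : ZMod (2 ^ 2)) = 0 := by
          rw [hrow]; exact sub_self _
        rcases hcase with ⟨ha, hb⟩ | ⟨ha, hb⟩ <;>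
          rcases hg1diff j with ⟨hpm, h0⟩ | ⟨h0, hpm⟩
        · right; left
          rw [hc0, ha, hb]
          have h0' : ((g1 j).2 : ZMod (γ ^ 2)) - (g1 (j+1)).2 = 0 := by
            rw [sub_eq_zero] at h0 ⊢; exact h0.symm
          rw [h0']
          exact ord_mid (pm_neg hpm)
        · right; right
          rw [hc0, ha, hb]
          have h0' : ((g1 j).1 : ZMod (β ^ 2)) - (g1 (j+1)).1 = 0 := by
            rw [sub_eq_zero] at h0 ⊢; exact h0.symm
          rw [h0']
          exact ord_last (pm_neg hpm)
        · right; left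
          rw [hc0, ha, hb, h0]
          exact ord_mid hpm
        · right; right
          rw [hc0, ha, hb, h0]
          exact ord_last hpm
    refine ⟨?_, hORD⟩
    intro hcontra
    have hz : f k - f (k+1) = 0 := by rw [hcontra, sub_self]
    rw [hz, addOrderOf_zero] at hORD
    rcases hORD with h | h | h <;> omega
  · -- injectivity of the enumeration
    intro i hi j hj hheq
    simp only [hfdef] at hheq
    have h0 := ψ.symm.injective hheq
    rw [Prod.mk.injEq, Prod.mk.injEq] at h0
    obtain ⟨⟨e1, e2⟩, e3⟩ := h0
    have b1 := hg2b i
    have b2 := hg2b j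
    have h4 : (2:ℕ) ^ 2 = 4 := by norm_num
    have e1' : (g2 i).1 = (g2 j).1 :=
      cast_inj_of_lt (h4 ▸ b1.1) (h4 ▸ b2.1) e1
    have e2' : (g2 i).2.1 = (g2 j).2.1 := cast_inj_of_lt b1.2.1 b2.2.1 e2
    have e3' : (g2 i).2.2 = (g2 j).2.2 := cast_inj_of_lt b1.2.2 b2.2.2 e3
    have hg2eq : g2 i = g2 j := Prod.ext e1' (Prod.ext e2' e3')
    have hn4 : 2 ^ 2 * β ^ 2 * γ ^ 2 = 4 * (β ^ 2 * γ ^ 2) := by ring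
    exact hg2inj i (by omega) j (by omega) hg2eq
end

section
/- If α > 2, then the graph Cay(G,C) is semi-Hamiltonian: it contains a Hamiltonian path, i.e., a path visiting every vertex exactly once. -/
/-- A sequence hitting every vertex exactly once with consecutive vertices adjacent
gives a Hamiltonian path. -/
lemma exists_ham_of_seq {V : Type*} [Fintype V] [DecidableEq V] (G : SimpleGraph V)
    (f : ℕ → V) (n : ℕ) (hn : Fintype.card V = n) (h0 : 0 < n)
    (hadj : ∀ i, i + 1 < n → G.Adj (f i) (f (i + 1)))
    (hinj : ∀ i < n, ∀ j < n, f i = f j → i = j) :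
    ∃ (u v : V) (p : G.Walk u v), p.IsPath ∧ p.IsHamiltonian := by
  have key : ∀ k, k < n → ∃ p : G.Walk (f 0) (f k),
      p.support = (List.range (k + 1)).map f := by
    intro k
    induction k with
    | zero => intro _; exact ⟨SimpleGraph.Walk.nil, by rw [show List.range 1 = [0] from rfl]; rfl⟩
    | succ k ih =>
      intro hk
      obtain ⟨p, hp⟩ := ih (by omega)
      refine ⟨p.concat (hadj k hk), ?_⟩
      rw [SimpleGraph.Walk.support_concat, hp, List.range_succ]
      simp [List.range_succ]
  obtain ⟨p, hp⟩ := key (n - 1) (by omega)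
  rw [show n - 1 + 1 = n by omega] at hp
  have hnodup : p.support.Nodup := by
    rw [hp]
    refine List.Nodup.map_on ?_ List.nodup_range
    intro i hi j hj hij
    exact hinj i (List.mem_range.mp hi) j (List.mem_range.mp hj) hij
  have hsurj : Function.Surjective (fun i : Fin n => f i) := by
    have hb : Function.Bijective (fun i : Fin n => f i) := by
      rw [Fintype.bijective_iff_injective_and_card]
      refine ⟨fun i j hij => Fin.ext (hinj i i.2 j j.2 hij), by simp [hn]⟩
    exact hb.2
  refine ⟨f 0, f (n - 1), p, (SimpleGraph.Walk.isPath_def p).mpr hnodup, ?_⟩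
  intro v
  obtain ⟨i, hi⟩ := hsurj v
  have hmem : v ∈ p.support := by
    rw [hp, List.mem_map]
    exact ⟨i, List.mem_range.mpr i.2, hi⟩
  exact List.count_eq_one_of_mem hnodup hmem

/-- Division/mod of a successor. -/
lemma succ_dm {c : ℕ} (hc : 0 < c) (i : ℕ) :
    (i % c + 1 < c ∧ (i + 1) / c = i / c ∧ (i + 1) % c = i % c + 1) ∨
    (i % c + 1 = c ∧ (i + 1) / c = i / c + 1 ∧ (i + 1) % c = 0) := by
  have h1 := Nat.div_add_mod i c
  have h2 : i % c < c := Nat.mod_lt _ hc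
  by_cases hs : i % c + 1 < c
  · left
    refine ⟨hs, ?_, ?_⟩
    · rw [show i + 1 = (i % c + 1) + c * (i / c) by omega,
        Nat.add_mul_div_left _ _ hc, Nat.div_eq_of_lt hs, zero_add]
    · rw [show i + 1 = (i % c + 1) + c * (i / c) by omega,
        Nat.add_mul_mod_self_left, Nat.mod_eq_of_lt hs]
  · right
    have he : i + 1 = c * (i / c + 1) := by rw [Nat.mul_succ]; omega
    refine ⟨by omega, ?_, ?_⟩
    · rw [he, Nat.mul_div_cancel_left _ hc]
    · rw [he]; exact Nat.mul_mod_right c _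

/-- Second coordinate of the snake. -/
def compB (B C i : ℕ) : ℕ :=
  if (i / C / B) % 2 = 0 then (i / C) % B else B - 1 - (i / C) % B

/-- Third coordinate of the snake. -/
def compC (C i : ℕ) : ℕ :=
  if (i / C) % 2 = 0 then i % C else C - 1 - i % C

lemma compB_lt {B : ℕ} (C i : ℕ) (hB : 0 < B) : compB B C i < B := by
  have := Nat.mod_lt (i / C) hB
  unfold compB; split_ifs <;> omega

lemma compC_lt {C : ℕ} (i : ℕ) (hC : 0 < C) : compC C i < C := by
  have := Nat.mod_lt i hC
  unfold compC; split_ifs <;> omega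

lemma snake_step (B C : ℕ) (hB : 0 < B) (hC : 0 < C) (i : ℕ) :
    ((i + 1) / C / B = i / C / B + 1 ∧ compB B C (i + 1) = compB B C i ∧
      compC C (i + 1) = compC C i) ∨
    ((i + 1) / C / B = i / C / B ∧ compC C (i + 1) = compC C i ∧
      (compB B C (i + 1) = compB B C i + 1 ∨ compB B C (i + 1) + 1 = compB B C i)) ∨
    ((i + 1) / C / B = i / C / B ∧ compB B C (i + 1) = compB B C i ∧
      (compC C (i + 1) = compC C i + 1 ∨ compC C (i + 1) + 1 = compC C i)) := by
  rcases succ_dm hC i with ⟨hs, hdiv, hmod⟩ | ⟨hs, hdiv, hmod⟩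
  · -- inner step : third coordinate moves
    right; right
    refine ⟨by rw [hdiv], by simp [compB, hdiv], ?_⟩
    simp only [compC, hdiv, hmod]
    split_ifs <;> omega
  · -- the third coordinate wraps
    have hmC : i % C < C := Nat.mod_lt _ hC
    have hcompC : compC C (i + 1) = compC C i := by
      simp only [compC, hdiv, hmod]
      split_ifs <;> omega
    rcases succ_dm hB (i / C) with ⟨hq, hdivB, hmodB⟩ | ⟨hq, hdivB, hmodB⟩
    · -- second coordinate moves
      right; left
      have hBlt : (i / C) % B < B := Nat.mod_lt _ hB
      refine ⟨by rw [hdiv, hdivB], hcompC, ?_⟩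
      simp only [compB, hdiv, hdivB, hmodB]
      split_ifs <;> omega
    · -- second coordinate wraps, first moves
      left
      refine ⟨by rw [hdiv, hdivB], ?_, hcompC⟩
      simp only [compB, hdiv, hdivB, hmodB]
      split_ifs <;> omega

lemma snake_inj {B C i j : ℕ} (hB : 0 < B) (hC : 0 < C)
    (h1 : i / C / B = j / C / B) (h2 : compB B C i = compB B C j)
    (h3 : compC C i = compC C j) : i = j := by
  have hti := Nat.div_add_mod (i / C) B
  have htj := Nat.div_add_mod (j / C) B
  have hi := Nat.div_add_mod i C
  have hj := Nat.div_add_mod j C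
  have hmB1 : (i / C) % B < B := Nat.mod_lt _ hB
  have hmB2 : (j / C) % B < B := Nat.mod_lt _ hB
  have hmC1 : i % C < C := Nat.mod_lt _ hC
  have hmC2 : j % C < C := Nat.mod_lt _ hC
  simp only [compB, compC, h1] at h2 h3
  rw [h1] at hti
  have ht : i / C = j / C := by split_ifs at h2 <;> omega
  rw [ht] at h3 hi
  have hm : i % C = j % C := by split_ifs at h3 <;> omega
  omega

theorem stmt_18 (α β γ : ℕ) (hα : α.Prime) (hβ : β.Prime) (hγ : γ.Prime)
    (hαβ : α < β) (hβγ : β < γ) (h2 : 2 < α) :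
    ∃ (u v : ZMod (α ^ 2 * β ^ 2 * γ ^ 2))
      (p : (cayP2 (α ^ 2 * β ^ 2 * γ ^ 2) α β γ).Walk u v),
        p.IsPath ∧ p.IsHamiltonian := by
  have hα0 : 0 < α := hα.pos
  have hβ0 : 0 < β := hβ.pos
  have hγ0 : 0 < γ := hγ.pos
  have hA1 : 1 < α ^ 2 := by nlinarith
  have hB1 : 1 < β ^ 2 := by nlinarith
  have hC1 : 1 < γ ^ 2 := by nlinarith
  have hA0 : 0 < α ^ 2 := by omega
  have hB0 : 0 < β ^ 2 := by omega
  have hC0 : 0 < γ ^ 2 := by omega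
  have cab : (α ^ 2).Coprime (β ^ 2) :=
    Nat.Coprime.pow 2 2 ((Nat.coprime_primes hα hβ).mpr (by omega))
  have cabc : (α ^ 2 * β ^ 2).Coprime (γ ^ 2) :=
    Nat.Coprime.mul (Nat.Coprime.pow 2 2 ((Nat.coprime_primes hα hγ).mpr (by omega)))
      (Nat.Coprime.pow 2 2 ((Nat.coprime_primes hβ hγ).mpr (by omega)))
  haveI : NeZero (α ^ 2 * β ^ 2 * γ ^ 2) := ⟨by positivity⟩
  haveI : NeZero (α ^ 2) := ⟨by omega⟩
  haveI : NeZero (β ^ 2) := ⟨by omega⟩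
  haveI : NeZero (γ ^ 2) := ⟨by omega⟩
  set E : ZMod (α ^ 2 * β ^ 2 * γ ^ 2) ≃+ (ZMod (α ^ 2) × ZMod (β ^ 2)) × ZMod (γ ^ 2) :=
    (ZMod.chineseRemainder cabc).toAddEquiv.trans
      (AddEquiv.prodCongr (ZMod.chineseRemainder cab).toAddEquiv (AddEquiv.refl _)) with hE
  set g : ℕ → (ZMod (α ^ 2) × ZMod (β ^ 2)) × ZMod (γ ^ 2) := fun i =>
    (((i / γ ^ 2 / β ^ 2 : ℕ), (compB (β ^ 2) (γ ^ 2) i : ℕ)), (compC (γ ^ 2) i : ℕ)) with hg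
  set f : ℕ → ZMod (α ^ 2 * β ^ 2 * γ ^ 2) := fun i => E.symm (g i) with hf
  have horder : ∀ x, addOrderOf (E.symm x) = addOrderOf x := fun x =>
    addOrderOf_injective E.symm.toAddMonoidHom E.symm.injective x
  apply exists_ham_of_seq _ f (α ^ 2 * β ^ 2 * γ ^ 2) (ZMod.card _) (by positivity)
  · -- adjacency of consecutive terms
    intro i _
    have hdiff : addOrderOf (f (i + 1) - f i) = α ^ 2 ∨
        addOrderOf (f (i + 1) - f i) = β ^ 2 ∨ addOrderOf (f (i + 1) - f i) = γ ^ 2 := by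
      have hsub : f (i + 1) - f i = E.symm (g (i + 1) - g i) := by
        rw [hf]; simp [map_sub]
      rw [hsub, horder]
      rcases snake_step (β ^ 2) (γ ^ 2) hB0 hC0 i with ⟨hA, hB, hC⟩ | ⟨hA, hC, hB | hB⟩ |
          ⟨hA, hB, hC | hC⟩
      · left
        have : g (i + 1) - g i = ((1, 0), 0) := by
          rw [hg]
          simp only [Prod.mk_sub_mk, hA, hB, hC]
          push_cast
          simp
        rw [this, Prod.addOrderOf, Prod.addOrderOf]
        simp
      · right; left
        have : g (i + 1) - g i = ((0, 1), 0) := by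
          rw [hg]
          simp only [Prod.mk_sub_mk, hA, hB, hC]
          push_cast
          simp
        rw [this, Prod.addOrderOf, Prod.addOrderOf]
        simp
      · right; left
        have : g (i + 1) - g i = ((0, -1), 0) := by
          rw [hg]
          simp only [Prod.mk_sub_mk, hA, hC]
          have hcst := congrArg (fun m : ℕ => (m : ZMod (β ^ 2))) hB
          push_cast at hcst
          simp only [Prod.mk.injEq]
          refine ⟨⟨by ring, by linear_combination hcst⟩, by ring⟩
        rw [this, Prod.addOrderOf, Prod.addOrderOf]
        simp [addOrderOf_neg]
      · right; right
        have : g (i + 1) - g i = ((0, 0), 1) := by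
          rw [hg]
          simp only [Prod.mk_sub_mk, hA, hB, hC]
          push_cast
          simp
        rw [this, Prod.addOrderOf, Prod.addOrderOf]
        simp
      · right; right
        have : g (i + 1) - g i = ((0, 0), -1) := by
          rw [hg]
          simp only [Prod.mk_sub_mk, hA, hB]
          have hcst := congrArg (fun m : ℕ => (m : ZMod (γ ^ 2))) hC
          push_cast at hcst
          simp only [Prod.mk.injEq]
          refine ⟨⟨by ring, by ring⟩, by linear_combination hcst⟩
        rw [this, Prod.addOrderOf, Prod.addOrderOf]
        simp [addOrderOf_neg]
    have hne : f i ≠ f (i + 1) := by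
      intro h
      rw [h, sub_self, addOrderOf_zero] at hdiff
      omega
    refine ⟨hne, ?_⟩
    rw [show f i - f (i + 1) = -(f (i + 1) - f i) by ring, addOrderOf_neg]
    exact hdiff
  · -- injectivity
    intro i hi j hj hfij
    have hgij : g i = g j := E.symm.injective hfij
    rw [hg] at hgij
    simp only [Prod.mk.injEq] at hgij
    obtain ⟨⟨e1, e2⟩, e3⟩ := hgij
    have b1i : i / γ ^ 2 / β ^ 2 < α ^ 2 := by
      rw [Nat.div_lt_iff_lt_mul hB0, Nat.div_lt_iff_lt_mul hC0]
      calc i < α ^ 2 * β ^ 2 * γ ^ 2 := hi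
        _ = α ^ 2 * β ^ 2 * γ ^ 2 := rfl
    have b1j : j / γ ^ 2 / β ^ 2 < α ^ 2 := by
      rw [Nat.div_lt_iff_lt_mul hB0, Nat.div_lt_iff_lt_mul hC0]
      exact hj
    have n1 : i / γ ^ 2 / β ^ 2 = j / γ ^ 2 / β ^ 2 := by
      have := congrArg ZMod.val e1
      rwa [ZMod.val_cast_of_lt b1i, ZMod.val_cast_of_lt b1j] at this
    have n2 : compB (β ^ 2) (γ ^ 2) i = compB (β ^ 2) (γ ^ 2) j := by
      have := congrArg ZMod.val e2
      rwa [ZMod.val_cast_of_lt (compB_lt _ _ hB0), ZMod.val_cast_of_lt (compB_lt _ _ hB0)]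
        at this
    have n3 : compC (γ ^ 2) i = compC (γ ^ 2) j := by
      have := congrArg ZMod.val e3
      rwa [ZMod.val_cast_of_lt (compC_lt _ hC0), ZMod.val_cast_of_lt (compC_lt _ hC0)] at this
    exact snake_inj hB0 hC0 n1 n2 n3
end
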